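/- arXiv:1503.04126 — 9 statements merged into one kernel-verified Lean document; each statement's English description precedes it below -/
import Mathlib

section
/- Let E : [0,∞) → [0,∞) be a non-increasing function, and suppose there exist constants α > 0 and T > 0 such that ∫_t^∞ E(s)^{α+1} ds ≤ T·E(0)^α·E(t) for all t ≥ 0. Then E(t) ≤ E(0)·((T + α·t)/(T + α·T))^{-1/α} for all t ≥ T. -/
/-!
Put F(u) = ∫_u^∞ E^{α+1} and c = T·E(0)^α. The hypothesis says F ≤ c·E, so
-F' = E^{α+1} ≥ (F/c)^{α+1}, and F^{-α} grows at rate at least α·c^{-(α+1)}. Starting from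
F(0) ≤ c·E(0) this gives F(s)^{-α} ≥ c^{-(α+1)}(T + α s). On the other hand E is
non-increasing, so F(s) ≥ (t - s)·E(t)^{α+1}, and the choice t - s = (T + α t)/(1 + α) = T + α s
combines the two bounds into (T + α s)·E(t)^α ≤ c, which is the claim.
F need not be differentiable: the growth of F^{-α} is read off its right difference quotients,
bounded below by the tangent line of x ↦ x^{-α}.
-/

open Real MeasureTheory Set Filter Topology

theorem one_add_mul_one_sub_le_rpow_neg {α u : ℝ} (hα : 0 ≤ α) (hu : 0 < u) :
    1 + α * (1 - u) ≤ u ^ (-α) := by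
  -- u ^ (-α) = exp (-α log u) ≥ 1 - α log u ≥ 1 - α (u - 1)
  rw [rpow_def_of_pos hu]
  nlinarith [add_one_le_exp (log u * -α), log_le_sub_one_of_pos hu]

theorem rpow_neg_add_mul_sub_le_rpow_neg {α x y : ℝ} (hα : 0 ≤ α) (hx : 0 < x) (hy : 0 < y) :
    x ^ (-α) + α * x ^ (-α - 1) * (x - y) ≤ y ^ (-α) := by
  have h := mul_le_mul_of_nonneg_left (one_add_mul_one_sub_le_rpow_neg hα (div_pos hy hx))
    (rpow_nonneg hx.le (-α))
  rw [div_rpow hy.le hx.le, mul_div_cancel₀ _ (rpow_pos_of_pos hx _).ne'] at h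
  calc x ^ (-α) + α * x ^ (-α - 1) * (x - y) = x ^ (-α) * (1 + α * (1 - y / x)) := by
        rw [rpow_sub_one hx.ne']; field_simp
    _ ≤ y ^ (-α) := h

theorem mul_sub_le_sub_of_forall_lt_slope {f : ℝ → ℝ} {a b K : ℝ} (hab : a ≤ b)
    (hf : ContinuousOn f (Icc a b))
    (hslope : ∀ x ∈ Ico a b, ∀ r < K, ∀ᶠ z in 𝓝[>] x, r < slope f x z) :
    K * (b - a) ≤ f b - f a := by
  have := image_le_of_liminf_slope_right_le_deriv_boundary (f := fun u => -f u)
    (B := fun u => -f a - K * (u - a)) (B' := fun _ => -K) hf.neg (by simp) (by fun_prop)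
    (fun x _ => by simpa using ((hasDerivAt_id x).sub_const a).const_mul K |>.const_sub (-f a)
      |>.hasDerivWithinAt)
    (fun x hx r hr => ((hslope x hx (-r) (by linarith)).mono fun z hz => by
      rw [slope_neg]; linarith).frequently) (right_mem_Icc.2 hab)
  linarith

theorem add_mul_mul_le_rpow_neg_of_decay {F : ℝ → ℝ} {a b α K : ℝ} (hab : a ≤ b) (hα : 0 ≤ α)
    (hF : ContinuousOn F (Icc a b)) (hpos : ∀ x ∈ Icc a b, 0 < F x)
    (hdecay : ∀ x ∈ Icc a b, ∀ z ∈ Icc a b, x ≤ z → (z - x) * (K * F z ^ (α + 1)) ≤ F x - F z) :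
    F a ^ (-α) + α * K * (b - a) ≤ F b ^ (-α) := by
  suffices α * K * (b - a) ≤ F b ^ (-α) - F a ^ (-α) by linarith
  refine mul_sub_le_sub_of_forall_lt_slope hab
    (hF.rpow_const fun x hx => Or.inl (hpos x hx).ne') fun x hx r hr => ?_
  have hxI : x ∈ Icc a b := Ico_subset_Icc_self hx
  have hFx := hpos x hxI
  have hnear : Icc a b ∈ 𝓝[>] x := Icc_mem_nhdsGT_of_mem hx
  have hlim : Tendsto (fun z => α * F x ^ (-α - 1) * (K * F z ^ (α + 1))) (𝓝[>] x)
      (𝓝 (α * K)) := by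
    have hcancel : F x ^ (-α - 1) * F x ^ (α + 1) = 1 := by
      rw [← rpow_add hFx]; norm_num
    have hFlim : Tendsto F (𝓝[>] x) (𝓝 (F x)) :=
      (hF x hxI).tendsto.mono_left (nhdsWithin_le_of_mem hnear)
    convert ((hFlim.rpow_const (Or.inl hFx.ne')).const_mul K).const_mul
      (α * F x ^ (-α - 1)) using 2
    linear_combination -(α * K) * hcancel
  filter_upwards [hlim.eventually (lt_mem_nhds hr), hnear, self_mem_nhdsWithin]
    with z hrz hz (hxz : x < z)
  refine hrz.trans_le ?_
  rw [slope_def_field, le_div_iff₀ (sub_pos.2 hxz)]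
  have htangent := rpow_neg_add_mul_sub_le_rpow_neg hα hFx (hpos z hz)
  have hstep := mul_le_mul_of_nonneg_left (hdecay x hxI z hz hxz.le)
    (mul_nonneg hα (rpow_nonneg hFx.le (-α - 1)))
  linarith

theorem AntitoneOn.rpow_const_of_nonneg {f : ℝ → ℝ} {s : Set ℝ} {p : ℝ} (hf : AntitoneOn f s)
    (hf0 : ∀ x ∈ s, 0 ≤ f x) (hp : 0 ≤ p) : AntitoneOn (fun x => f x ^ p) s :=
  fun _ hx _ hy hxy => rpow_le_rpow (hf0 _ hy) (hf hx hy hxy) hp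

theorem mul_le_integral_Ioi_sub_integral_Ioi {g : ℝ → ℝ} {a x z : ℝ} (hg : AntitoneOn g (Ici a))
    (hint : IntegrableOn g (Ioi a)) (hx : a ≤ x) (hxz : x ≤ z) :
    (z - x) * g z ≤ (∫ s in Ioi x, g s) - ∫ s in Ioi z, g s := by
  have hgxz : AntitoneOn g (uIcc x z) :=
    hg.mono ((uIcc_of_le hxz).trans_subset (Icc_subset_Ici_iff hxz |>.2 hx))
  rw [intervalIntegral.integral_Ioi_sub_Ioi (hint.mono_set (Ioi_subset_Ioi hx)) hxz]
  calc (z - x) * g z = ∫ _ in x..z, g z := by simp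
    _ ≤ ∫ s in x..z, g s :=
      intervalIntegral.integral_mono_on hxz intervalIntegrable_const hgxz.intervalIntegrable
        fun s hs => hg (hx.trans hs.1) (hx.trans hxz) hs.2

theorem mul_rpow_le_of_mul_le_rpow_neg {α c R e : ℝ} (hα : 0 ≤ α) (hc : 0 < c) (hR : 0 < R)
    (he : 0 < e) (h : c ^ (-(α + 1)) * R ≤ (R * e ^ (α + 1)) ^ (-α)) : R * e ^ α ≤ c := by
  have hsplit : (R * e ^ (α + 1)) ^ (-α) = (R * e ^ α) ^ (-(α + 1)) * R := by
    rw [mul_rpow hR.le (rpow_nonneg he.le _), mul_rpow hR.le (rpow_nonneg he.le _),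
      ← rpow_mul he.le, ← rpow_mul he.le, show -α = -(α + 1) + 1 by ring, rpow_add_one hR.ne']
    ring_nf
  rw [hsplit, mul_le_mul_iff_left₀ hR] at h
  exact (rpow_le_rpow_iff_of_neg hc (by positivity) (by linarith)).1 h

theorem le_mul_rpow_neg_inv_of_rpow_mul_le {α e M q : ℝ} (hα : 0 < α) (he : 0 ≤ e) (hM : 0 ≤ M)
    (hq : 0 < q) (h : e ^ α * q ≤ M ^ α) : e ≤ M * q ^ (-(1 / α)) := by
  calc e = (e ^ α) ^ (1 / α) := by rw [← rpow_mul he, mul_one_div_cancel hα.ne', rpow_one]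
    _ ≤ (M ^ α * q⁻¹) ^ (1 / α) :=
      rpow_le_rpow (by positivity) ((le_mul_inv_iff₀ hq).2 h) (by positivity)
    _ = M * q ^ (-(1 / α)) := by
      rw [mul_rpow (by positivity) (by positivity), ← rpow_mul hM, mul_one_div_cancel hα.ne',
        rpow_one, inv_rpow hq.le, rpow_neg hq.le]

theorem rpow_neg_integral_Ioi_ge {E : ℝ → ℝ} {α T s : ℝ} (hE_nonneg : ∀ t ≥ (0:ℝ), 0 ≤ E t)
    (hE_anti : AntitoneOn E (Ici 0)) (hα : 0 ≤ α) (hT : 0 < T) (hE0 : 0 < E 0)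
    (hInt : IntegrableOn (fun s => E s ^ (α + 1)) (Ioi 0))
    (hIneq : ∀ t ≥ (0:ℝ), ∫ s in Ioi t, E s ^ (α + 1) ≤ T * E 0 ^ α * E t) (hs : 0 ≤ s)
    (hFs : 0 < ∫ u in Ioi s, E u ^ (α + 1)) :
    (T * E 0 ^ α) ^ (-(α + 1)) * (T + α * s) ≤ (∫ u in Ioi s, E u ^ (α + 1)) ^ (-α) := by
  set F : ℝ → ℝ := fun u => ∫ v in Ioi u, E v ^ (α + 1)
  set c := T * E 0 ^ α with hc_def
  have hc : 0 < c := by positivity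
  have hFs' : 0 < F s := hFs
  have hloss : ∀ x z, 0 ≤ x → x ≤ z → (z - x) * E z ^ (α + 1) ≤ F x - F z :=
    fun x z hx hxz => mul_le_integral_Ioi_sub_integral_Ioi
      (hE_anti.rpow_const_of_nonneg hE_nonneg (by linarith)) hInt hx hxz
  have hpos : ∀ x ∈ Icc 0 s, 0 < F x := fun x hx =>
    hFs'.trans_le (by
      linarith [hloss x s hx.1 hx.2,
        mul_nonneg (sub_nonneg.2 hx.2) (rpow_nonneg (hE_nonneg s hs) (α + 1))])
  have hdecay : ∀ x ∈ Icc 0 s, ∀ z ∈ Icc 0 s, x ≤ z →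
      (z - x) * (c ^ (-(α + 1)) * F z ^ (α + 1)) ≤ F x - F z := by
    intro x hx z hz hxz
    have hFE : c ^ (-(α + 1)) * F z ^ (α + 1) ≤ E z ^ (α + 1) := by
      rw [rpow_neg hc.le, inv_mul_eq_div, ← div_rpow (hpos z hz).le hc.le]
      exact rpow_le_rpow (div_nonneg (hpos z hz).le hc.le)
        ((div_le_iff₀' hc).2 (hIneq z hz.1)) (by linarith)
    exact (mul_le_mul_of_nonneg_left hFE (sub_nonneg.2 hxz)).trans (hloss x z hx.1 hxz)
  have hgrowth := add_mul_mul_le_rpow_neg_of_decay hs hα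
    (hInt.continuousOn_Ici_primitive_Ioi.mono Icc_subset_Ici_self) hpos hdecay
  have hF0 : (c * E 0) ^ (-α) ≤ F 0 ^ (-α) :=
    rpow_le_rpow_of_nonpos (hpos 0 ⟨le_rfl, hs⟩) (hIneq 0 le_rfl) (by linarith)
  have hinit : c ^ (-(α + 1)) * T = (c * E 0) ^ (-α) := by
    rw [mul_rpow hc.le hE0.le, rpow_neg hE0.le, neg_add, rpow_add hc, rpow_neg_one, hc_def]
    field_simp
  rw [mul_add, hinit]
  linarith

theorem stmt_0 (E : ℝ → ℝ) (α T : ℝ)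
    (hE_nonneg : ∀ t ≥ (0:ℝ), 0 ≤ E t)
    (hE_anti : AntitoneOn E (Set.Ici 0))
    (hα : 0 < α) (hT : 0 < T)
    (hInt : ∀ t ≥ (0:ℝ), IntegrableOn (fun s => E s ^ (α + 1)) (Set.Ioi t))
    (hIneq : ∀ t ≥ (0:ℝ), ∫ s in Set.Ioi t, E s ^ (α + 1) ≤ T * E 0 ^ α * E t) :
    ∀ t ≥ T, E t ≤ E 0 * ((T + α * t) / (T + α * T)) ^ (-(1 / α)) := by
  intro t ht
  have ht0 : 0 < t := hT.trans_le ht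
  obtain het | het := (hE_nonneg t ht0.le).eq_or_lt
  · rw [← het]
    exact mul_nonneg (hE_nonneg 0 le_rfl) (rpow_nonneg (by positivity) _)
  have hE0 : 0 < E 0 := het.trans_le (hE_anti self_mem_Ici ht0.le ht0.le)
  set R := (T + α * t) / (1 + α) with hR_def
  have hR : 0 < R := by positivity
  have hRt : R ≤ t := by rw [div_le_iff₀ (by positivity)]; nlinarith
  have hFR : R * E t ^ (α + 1) ≤ ∫ u in Ioi (t - R), E u ^ (α + 1) := by
    have := mul_le_integral_Ioi_sub_integral_Ioi
      (hE_anti.rpow_const_of_nonneg hE_nonneg (by linarith))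
      (hInt 0 le_rfl) (sub_nonneg.2 hRt) (sub_le_self t hR.le)
    have hFt : 0 ≤ ∫ u in Ioi t, E u ^ (α + 1) := setIntegral_nonneg measurableSet_Ioi
      fun u hu => rpow_nonneg (hE_nonneg u (ht0.le.trans (le_of_lt hu))) _
    rw [sub_sub_cancel] at this
    linarith
  have hgrowth := rpow_neg_integral_Ioi_ge hE_nonneg hE_anti hα.le hT hE0 (hInt 0 le_rfl) hIneq
    (sub_nonneg.2 hRt) ((mul_pos hR (rpow_pos_of_pos het _)).trans_le hFR)
  rw [show T + α * (t - R) = R by rw [hR_def]; field_simp; ring] at hgrowth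
  have hRE := mul_rpow_le_of_mul_le_rpow_neg hα.le (by positivity) hR het
    (hgrowth.trans (rpow_le_rpow_of_nonpos (by positivity) hFR (by linarith)))
  refine le_mul_rpow_neg_inv_of_rpow_mul_le hα het.le hE0.le (by positivity) ?_
  calc E t ^ α * ((T + α * t) / (T + α * T)) = R * E t ^ α / T := by
        rw [hR_def]; field_simp
    _ ≤ T * E 0 ^ α / T := by gcongr
    _ = E 0 ^ α := by field_simp
end

section
/- Let E : [0,∞) → [0,∞) be a non-increasing function, and suppose there exist constants α > 0 and M > 0 such that ∫_t^∞ E(s)^{α+1} ds ≤ M·E(t) for all t ≥ 0. Then E(t) ≤ E(0)·min( (M(α+1)/(M + α·E(0)^α·t))^{1/α}, 1 ) for all t ≥ 0. -/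
/-!
The tail `H x = ∫_x^∞ E^(α+1)` satisfies `H ≤ M E` and drops by at least `(z - x) E(z)^(α+1)`
on `[x, z]`, so its right slopes are at most `-(H / M)^(α+1)`. Comparing with the explicit
solution of `y' = -y^(α+1) / M^(α+1)`, `y 0 = M E(0)` bounds `H(a)`; then
`(t - a) E(t)^(α+1) ≤ H(a)` for `a ≤ t`, and the optimal `a` gives the claim.
-/

open Real MeasureTheory Set Filter Topology

-- The solution of `y' = -K y^(α+1)`, `y 0 = c`.
noncomputable def powDecay (α K c x : ℝ) : ℝ := c * (1 + α * K * c ^ α * x) ^ (-(1 / α))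

section powDecay

variable {α K c x : ℝ}

@[simp]
lemma powDecay_zero : powDecay α K c 0 = c := by simp [powDecay]

lemma powDecay_pos (hc : 0 < c) (hx : 0 < 1 + α * K * c ^ α * x) : 0 < powDecay α K c x :=
  mul_pos hc (rpow_pos_of_pos hx _)

lemma powDecay_rpow_succ (hα : α ≠ 0) (hc : 0 < c) (hx : 0 < 1 + α * K * c ^ α * x) :
    powDecay α K c x ^ (α + 1) = c ^ α * c * (1 + α * K * c ^ α * x) ^ (-(1 / α) - 1) := by
  rw [powDecay, mul_rpow hc.le (rpow_nonneg hx.le _), ← rpow_mul hx.le, rpow_add hc, rpow_one]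
  congr 2
  field_simp
  ring

lemma hasDerivAt_powDecay (hα : α ≠ 0) (hc : 0 < c) (hx : 0 < 1 + α * K * c ^ α * x) :
    HasDerivAt (powDecay α K c) (-K * powDecay α K c x ^ (α + 1)) x := by
  have hL : HasDerivAt (fun y => 1 + α * K * c ^ α * y) (α * K * c ^ α) x := by
    simpa using ((hasDerivAt_id x).const_mul (α * K * c ^ α)).const_add 1
  refine ((hL.rpow_const (p := -(1 / α)) (Or.inl hx.ne')).const_mul c).congr_deriv ?_
  rw [powDecay_rpow_succ hα hc hx]
  field_simp

end powDecay

lemma frequently_slope_lt_of_eventually_slope_le {f g : ℝ → ℝ} {x r : ℝ}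
    (hg : ContinuousWithinAt g (Ioi x) x) (hslope : ∀ᶠ z in 𝓝[>] x, slope f x z ≤ g z)
    (hr : g x < r) : ∃ᶠ z in 𝓝[>] x, slope f x z < r :=
  (hslope.and (hg.eventually_lt_const hr)).frequently.mono fun _ h => h.1.trans_lt h.2

section comparison

variable {f : ℝ → ℝ} {α K c b : ℝ}

-- `K' < K` makes the comparison strict wherever `f` touches the barrier.
lemma le_powDecay_of_slope_le_of_lt {K' : ℝ} (hα : 0 < α) (hc : 0 < c) (hK' : 0 ≤ K')
    (hK'K : K' < K) (hf : ContinuousOn f (Icc 0 b)) (hf0 : f 0 ≤ c)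
    (hslope : ∀ x ∈ Ico 0 b, ∀ᶠ z in 𝓝[>] x, slope f x z ≤ -K * f z ^ (α + 1)) :
    ∀ x ∈ Icc 0 b, f x ≤ powDecay α K' c x := by
  have hbase : ∀ x, 0 ≤ x → 0 < 1 + α * K' * c ^ α * x := fun x hx => by positivity
  have hderiv : ∀ x ∈ Icc 0 b,
      HasDerivAt (powDecay α K' c) (-K' * powDecay α K' c x ^ (α + 1)) x := fun x hx =>
    hasDerivAt_powDecay hα.ne' hc (hbase x hx.1)
  refine image_le_of_liminf_slope_right_lt_deriv_boundary' (f' := fun x => -K * f x ^ (α + 1))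
    hf (fun x hx r hr => ?_) (by simpa using hf0)
    (fun x hx => (hderiv x hx).continuousAt.continuousWithinAt)
    (fun x hx => (hderiv x (Ico_subset_Icc_self hx)).hasDerivWithinAt) (fun x hx hfx => ?_)
  · have hfx : ContinuousWithinAt f (Ioi x) x :=
      (hf x (Ico_subset_Icc_self hx)).mono_of_mem_nhdsWithin (Icc_mem_nhdsGT_of_mem hx)
    exact frequently_slope_lt_of_eventually_slope_le
      ((hfx.rpow_const (Or.inr (by linarith))).const_mul (-K)) (hslope x hx) hr
  · have := rpow_pos_of_pos (powDecay_pos hc (hbase x hx.1)) (α + 1)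
    rw [hfx]
    nlinarith

theorem le_powDecay_of_slope_le (hα : 0 < α) (hc : 0 < c) (hK : 0 < K) (hb : 0 ≤ b)
    (hf : ContinuousOn f (Icc 0 b)) (hf0 : f 0 ≤ c)
    (hslope : ∀ x ∈ Ico 0 b, ∀ᶠ z in 𝓝[>] x, slope f x z ≤ -K * f z ^ (α + 1)) :
    f b ≤ powDecay α K c b := by
  have hbase : ContinuousAt (fun K' => 1 + α * K' * c ^ α * b) K := by fun_prop
  have hcont : ContinuousAt (fun K' => powDecay α K' c b) K :=
    continuousAt_const.mul (hbase.rpow_const (Or.inl (by positivity)))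
  refine ge_of_tendsto (hcont.tendsto.mono_left (nhdsWithin_le_nhds (s := Iio K))) ?_
  filter_upwards [Ioo_mem_nhdsLT hK] with K' hK'
  exact le_powDecay_of_slope_le_of_lt hα hc hK'.1.le hK'.2 hf hf0 hslope b (right_mem_Icc.2 hb)

end comparison

lemma AntitoneOn.rpow_const {E : ℝ → ℝ} {s : Set ℝ} {p : ℝ} (hE_anti : AntitoneOn E s)
    (hE_nonneg : ∀ t ∈ s, 0 ≤ E t) (hp : 0 ≤ p) : AntitoneOn (fun s => E s ^ p) s :=
  fun _ hx _ hy hxy => rpow_le_rpow (hE_nonneg _ hy) (hE_anti hx hy hxy) hp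

lemma sub_mul_le_integral_Ioi_sub {G : ℝ → ℝ} {a b : ℝ} (hG : AntitoneOn G (Icc a b))
    (hint : IntegrableOn G (Ioi a)) (hab : a ≤ b) :
    (b - a) * G b ≤ (∫ s in Ioi a, G s) - ∫ s in Ioi b, G s := by
  rw [intervalIntegral.integral_Ioi_sub_Ioi hint hab]
  calc (b - a) * G b = ∫ _ in a..b, G b := by simp
    _ ≤ ∫ s in a..b, G s :=
      intervalIntegral.integral_mono_on hab intervalIntegrable_const
        ((intervalIntegrable_iff_integrableOn_Ioc_of_le hab).2 (hint.mono_set Ioc_subset_Ioi_self))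
        fun s hs => hG hs (right_mem_Icc.2 hab) hs.2

lemma le_of_mul_rpow_le_powDecay {α M e₀ e t : ℝ} (hα : 0 < α) (hM : 0 < M) (he₀ : 0 < e₀)
    (he : 0 ≤ e) (hlarge : M < e₀ ^ α * t)
    (h : ∀ a, 0 ≤ a → a ≤ t → (t - a) * e ^ (α + 1) ≤ powDecay α (M ^ (α + 1))⁻¹ (M * e₀) a) :
    e ≤ e₀ * (M * (α + 1) / (M + α * e₀ ^ α * t)) ^ (1 / α) := by
  set P := e₀ ^ α with hP
  have hP0 : 0 < P := rpow_pos_of_pos he₀ α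
  set Y := M * (α + 1) / (M + α * P * t) with hY
  have hD : 0 < M + α * P * t := by nlinarith
  have hY0 : 0 < Y := div_pos (by positivity) hD
  set X := Y ^ (1 / α)
  -- the `a` minimizing the resulting bound
  set a := (t - M / P) / (α + 1) with ha
  have hMP : M / P < t := (div_lt_iff₀ hP0).2 (by linarith)
  have ha0 : 0 ≤ a := div_nonneg (by linarith) (by linarith)
  have hbase : 1 + α * (M ^ (α + 1))⁻¹ * (M * e₀) ^ α * a = Y⁻¹ := by
    rw [mul_rpow hM.le he₀.le, rpow_add hM, rpow_one, ← hP, ha, hY]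
    field_simp
    ring
  have hdecay : powDecay α (M ^ (α + 1))⁻¹ (M * e₀) a = M * e₀ * X := by
    rw [powDecay, hbase, rpow_neg (inv_nonneg.2 hY0.le), inv_rpow hY0.le, inv_inv]
  have hta_eq : t - a = (M + α * P * t) / (P * (α + 1)) := by
    rw [ha]
    field_simp
    ring
  have hta : 0 < t - a := by rw [hta_eq]; positivity
  have hlength : (t - a) * P * Y = M := by
    rw [hta_eq, hY]
    field_simp
  have hpow : (e₀ * X) ^ (α + 1) = e₀ * P * Y * X := by
    rw [mul_rpow he₀.le (rpow_nonneg hY0.le _), rpow_add he₀, rpow_one,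
      rpow_add (rpow_pos_of_pos hY0 _), rpow_one, ← rpow_mul hY0.le, one_div_mul_cancel hα.ne',
      rpow_one]
    ring
  have key : (t - a) * e ^ (α + 1) ≤ (t - a) * (e₀ * X) ^ (α + 1) := by
    calc (t - a) * e ^ (α + 1) ≤ M * e₀ * X := hdecay ▸ h a ha0 (sub_pos.1 hta).le
      _ = (t - a) * (e₀ * X) ^ (α + 1) := by rw [hpow, ← hlength]; ring
  exact (rpow_le_rpow_iff he (by positivity) (by linarith)).1 (le_of_mul_le_mul_left key hta)

lemma integral_Ioi_rpow_le_powDecay {E : ℝ → ℝ} {α M : ℝ} (hE_nonneg : ∀ t ≥ (0:ℝ), 0 ≤ E t)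
    (hE_anti : AntitoneOn E (Ici 0)) (hα : 0 < α) (hM : 0 < M) (hE0 : 0 < E 0)
    (hInt : IntegrableOn (fun s => E s ^ (α + 1)) (Ioi 0))
    (hIneq : ∀ t ≥ (0:ℝ), ∫ s in Ioi t, E s ^ (α + 1) ≤ M * E t) {b : ℝ} (hb : 0 ≤ b) :
    ∫ s in Ioi b, E s ^ (α + 1) ≤ powDecay α (M ^ (α + 1))⁻¹ (M * E 0) b := by
  set H := fun x => ∫ s in Ioi x, E s ^ (α + 1)
  have hG_anti := hE_anti.rpow_const hE_nonneg (by linarith : 0 ≤ α + 1)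
  have hH_nonneg : ∀ x ≥ (0:ℝ), 0 ≤ H x := fun x hx =>
    setIntegral_nonneg measurableSet_Ioi fun s hs => rpow_nonneg (hE_nonneg s (hx.trans hs.le)) _
  have hH_le : ∀ x ≥ (0:ℝ), (M ^ (α + 1))⁻¹ * H x ^ (α + 1) ≤ E x ^ (α + 1) := fun x hx => by
    rw [inv_mul_le_iff₀ (by positivity), ← mul_rpow hM.le (hE_nonneg x hx)]
    exact rpow_le_rpow (hH_nonneg x hx) (hIneq x hx) (by linarith)
  refine le_powDecay_of_slope_le hα (mul_pos hM hE0) (by positivity) hb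
    (hInt.continuousOn_Ici_primitive_Ioi.mono Icc_subset_Ici_self) (hIneq 0 le_rfl)
    fun x hx => ?_
  filter_upwards [self_mem_nhdsWithin] with z (hxz : x < z)
  have hdrop : (z - x) * E z ^ (α + 1) ≤ H x - H z :=
    sub_mul_le_integral_Ioi_sub (hG_anti.mono (Icc_subset_Ici_iff hxz.le |>.2 hx.1))
      (hInt.mono_set (Ioi_subset_Ioi hx.1)) hxz.le
  rw [slope_def_field, div_le_iff₀ (sub_pos.2 hxz)]
  nlinarith [hH_le z (hx.1.trans hxz.le), sub_pos.2 hxz]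

theorem stmt_1 (E : ℝ → ℝ) (α M : ℝ)
    (hE_nonneg : ∀ t ≥ (0:ℝ), 0 ≤ E t)
    (hE_anti : AntitoneOn E (Set.Ici 0))
    (hα : 0 < α) (hM : 0 < M)
    (hInt : ∀ t ≥ (0:ℝ), IntegrableOn (fun s => E s ^ (α + 1)) (Set.Ioi t))
    (hIneq : ∀ t ≥ (0:ℝ), ∫ s in Set.Ioi t, E s ^ (α + 1) ≤ M * E t) :
    ∀ t ≥ (0:ℝ),
      E t ≤ E 0 * min ((M * (α + 1) / (M + α * E 0 ^ α * t)) ^ (1 / α)) 1 := by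
  intro t ht
  have hE0_nonneg : 0 ≤ E 0 := hE_nonneg 0 le_rfl
  have hEt_le : E t ≤ E 0 := hE_anti self_mem_Ici ht ht
  rw [mul_min_of_nonneg _ _ hE0_nonneg, mul_one]
  refine le_min ?_ hEt_le
  rcases le_or_gt (E 0 ^ α * t) M with hsmall | hlarge
  · have hY : 1 ≤ M * (α + 1) / (M + α * E 0 ^ α * t) := by
      rw [le_div_iff₀ (by positivity)]
      nlinarith
    exact hEt_le.trans (le_mul_of_one_le_right hE0_nonneg (one_le_rpow hY (by positivity)))
  have hE0 : 0 < E 0 := hE0_nonneg.lt_of_ne fun h => by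
    rw [← h, zero_rpow hα.ne'] at hlarge
    linarith
  have hG_anti := hE_anti.rpow_const hE_nonneg (by linarith : 0 ≤ α + 1)
  refine le_of_mul_rpow_le_powDecay hα hM hE0 (hE_nonneg t ht) hlarge fun a ha hat => ?_
  calc (t - a) * E t ^ (α + 1)
      ≤ (∫ s in Ioi a, E s ^ (α + 1)) - ∫ s in Ioi t, E s ^ (α + 1) :=
        sub_mul_le_integral_Ioi_sub (hG_anti.mono (Icc_subset_Ici_iff hat |>.2 ha)) (hInt a ha) hat
    _ ≤ ∫ s in Ioi a, E s ^ (α + 1) :=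
        sub_le_self _ <| setIntegral_nonneg measurableSet_Ioi fun s hs =>
          rpow_nonneg (hE_nonneg s (ht.trans hs.le)) _
    _ ≤ _ := integral_Ioi_rpow_le_powDecay hE_nonneg hE_anti hα hM hE0 (hInt 0 le_rfl) hIneq ha
end

section
/- Let E : [0,∞) → [0,∞) be a non-increasing function with E(0) > 0, and suppose there exist constants α > 0 and M > 0 such that ∫_t^∞ E(s)^{α+1} ds ≤ M·E(t) for all t ≥ 0. Then E(t) ≤ E(0)·(M(α+1)/(M + α·E(0)^α·t))^{1/α} for all t ≥ M·E(0)^{-α}. -/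
open Real MeasureTheory Set Filter Topology

theorem stmt_2 (E : ℝ → ℝ) (α M : ℝ)
    (hE_nonneg : ∀ t ≥ (0:ℝ), 0 ≤ E t)
    (hE_anti : AntitoneOn E (Set.Ici 0))
    (hE0 : 0 < E 0)
    (hα : 0 < α) (hM : 0 < M)
    (hInt : ∀ t ≥ (0:ℝ), IntegrableOn (fun s => E s ^ (α + 1)) (Set.Ioi t))
    (hIneq : ∀ t ≥ (0:ℝ), ∫ s in Set.Ioi t, E s ^ (α + 1) ≤ M * E t) :
    ∀ t ≥ M * E 0 ^ (-α),
      E t ≤ E 0 * (M * (α + 1) / (M + α * E 0 ^ α * t)) ^ (1 / α) := by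
  have hp : (0:ℝ) < α + 1 := by linarith
  set p : ℝ := α + 1 with hpdef
  have hE0' : (0:ℝ) ≤ E 0 := hE0.le
  set h : ℝ → ℝ := fun t => ∫ s in Set.Ioi t, E s ^ p with hh
  have hIneq' : ∀ t, 0 ≤ t → h t ≤ M * E t := fun t ht => hIneq t ht
  have hnn : ∀ t, 0 ≤ t → 0 ≤ h t := by
    intro t ht
    apply setIntegral_nonneg measurableSet_Ioi
    intro x hx
    exact Real.rpow_nonneg (hE_nonneg x (ht.trans (le_of_lt hx))) p
  have hsplit : ∀ t1 t2 : ℝ, 0 ≤ t1 → t1 ≤ t2 →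
      h t1 = (∫ s in Set.Ioc t1 t2, E s ^ p) + h t2 := by
    intro t1 t2 h0 h12
    have := MeasureTheory.setIntegral_union (f := fun s => E s ^ p) (μ := volume)
      (Set.Ioc_disjoint_Ioi le_rfl) measurableSet_Ioi
      ((hInt t1 h0).mono_set Set.Ioc_subset_Ioi_self) (hInt t2 (h0.trans h12))
    rw [Set.Ioc_union_Ioi_eq_Ioi h12] at this
    exact this
  have hlow : ∀ t1 t2 : ℝ, 0 ≤ t1 → t1 ≤ t2 →
      (t2 - t1) * E t2 ^ p ≤ ∫ s in Set.Ioc t1 t2, E s ^ p := by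
    intro t1 t2 h0 h12
    have hc : (∫ _ in Set.Ioc t1 t2, E t2 ^ p ∂volume) = (t2 - t1) * E t2 ^ p := by
      rw [setIntegral_const, measureReal_def, Real.volume_Ioc, ENNReal.toReal_ofReal (by linarith), smul_eq_mul]
    rw [← hc]
    apply setIntegral_mono_on (integrableOn_const measure_Ioc_lt_top.ne)
      ((hInt t1 h0).mono_set Set.Ioc_subset_Ioi_self) measurableSet_Ioc
    intro x hx
    exact Real.rpow_le_rpow (hE_nonneg t2 (h0.trans h12))
      (hE_anti (mem_Ici.2 (h0.trans hx.1.le)) (mem_Ici.2 (h0.trans h12)) hx.2) hp.le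
  have hupp : ∀ t1 t2 : ℝ, 0 ≤ t1 → t1 ≤ t2 →
      (∫ s in Set.Ioc t1 t2, E s ^ p) ≤ (t2 - t1) * E 0 ^ p := by
    intro t1 t2 h0 h12
    have hc : (∫ _ in Set.Ioc t1 t2, E 0 ^ p ∂volume) = (t2 - t1) * E 0 ^ p := by
      rw [setIntegral_const, measureReal_def, Real.volume_Ioc, ENNReal.toReal_ofReal (by linarith), smul_eq_mul]
    rw [← hc]
    apply setIntegral_mono_on ((hInt t1 h0).mono_set Set.Ioc_subset_Ioi_self)
      (integrableOn_const measure_Ioc_lt_top.ne) measurableSet_Ioc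
    intro x hx
    exact Real.rpow_le_rpow (hE_nonneg x (h0.trans hx.1.le))
      (hE_anti (self_mem_Ici) (mem_Ici.2 (h0.trans hx.1.le)) (h0.trans hx.1.le)) hp.le
  have hcont : ContinuousOn h (Set.Ici 0) := by
    have : LipschitzOnWith (Real.toNNReal (E 0 ^ p)) h (Set.Ici 0) := by
      rw [lipschitzOnWith_iff_dist_le_mul]
      have key : ∀ y x : ℝ, 0 ≤ y → y ≤ x →
          0 ≤ h y - h x ∧ h y - h x ≤ (x - y) * E 0 ^ p := by
        intro y x h0 hyx
        have hs := hsplit y x h0 hyx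
        have h1 := hlow y x h0 hyx
        have h2 := hupp y x h0 hyx
        have h3 : (0:ℝ) ≤ (x - y) * E x ^ p :=
          mul_nonneg (by linarith) (Real.rpow_nonneg (hE_nonneg x (h0.trans hyx)) p)
        constructor <;> linarith
      intro x hx y hy
      rw [Real.dist_eq, Real.dist_eq, Real.coe_toNNReal _ (Real.rpow_nonneg hE0' p)]
      rcases le_total x y with hxy | hxy
      · obtain ⟨c1, c2⟩ := key x y hx hxy
        rw [abs_of_nonneg (by linarith), abs_of_nonpos (by linarith : x - y ≤ 0)]
        linarith
      · obtain ⟨c1, c2⟩ := key y x hy hxy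
        rw [abs_of_nonpos (by linarith), abs_of_nonneg (by linarith : 0 ≤ x - y)]
        linarith
    exact this.continuousOn
  -- the comparison function
  set c : ℝ := (M * E 0) ^ (-α) with hcdef
  set k : ℝ := α * M ^ (-p) with hkdef
  have hc : 0 < c := Real.rpow_pos_of_pos (mul_pos hM hE0) _
  have hk : 0 < k := mul_pos hα (Real.rpow_pos_of_pos hM _)
  set ψ : ℝ → ℝ := fun t => (c + k * t) ^ (-(1/α)) with hψdef
  have hbase : ∀ x : ℝ, 0 ≤ x → 0 < c + k * x := fun x hx =>
    add_pos_of_pos_of_nonneg hc (mul_nonneg hk.le hx)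
  have hψpos : ∀ x : ℝ, 0 ≤ x → 0 < ψ x := fun x hx =>
    Real.rpow_pos_of_pos (hbase x hx) _
  have hψ0 : ψ 0 = M * E 0 := by
    have : ψ 0 = c ^ (-(1/α)) := by simp [hψdef]
    rw [this, hcdef, ← Real.rpow_mul (mul_pos hM hE0).le]
    rw [show -α * -(1/α) = 1 by field_simp]
    exact Real.rpow_one _
  have hψderiv : ∀ x : ℝ, 0 ≤ x → HasDerivAt ψ (-((ψ x) / M) ^ p) x := by
    intro x hx
    have hb := hbase x hx
    have h1 : HasDerivAt (fun t : ℝ => c + k * t) k x := by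
      simpa using ((hasDerivAt_id x).const_mul k).const_add c
    have h2 := h1.rpow_const (p := -(1/α)) (Or.inl hb.ne')
    convert h2 using 1
    rw [Real.div_rpow (Real.rpow_nonneg hb.le _) hM.le, ← Real.rpow_mul hb.le]
    rw [show -(1/α) * p = -(1/α) - 1 by rw [hpdef]; field_simp; ring]
    rw [hkdef, Real.rpow_neg hM.le p]
    field_simp
  -- comparison: h ≤ ψ on [0, ∞)
  have hcomp : ∀ t : ℝ, 0 ≤ t → h t ≤ ψ t := by
    intro t ht
    refine le_of_forall_pos_le_add ?_
    intro ε hε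
    have key := image_le_of_liminf_slope_right_lt_deriv_boundary'
      (f := h) (f' := fun x => -((h x)/M) ^ p) (a := 0) (b := t)
      (B := fun x => ψ x + ε) (B' := fun x => -((ψ x)/M) ^ p)
      (hcont.mono Set.Icc_subset_Ici_self)
      ?_ (by have := hIneq' 0 le_rfl; show h 0 ≤ ψ 0 + ε; rw [hψ0]; linarith)
      (fun x hx => (((hψderiv x hx.1).continuousAt.add continuousAt_const).continuousWithinAt))
      (fun x hx => ((hψderiv x hx.1).hasDerivWithinAt).add_const ε)
      ?_
    · exact key ⟨ht, le_rfl⟩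
    · -- slope bound
      intro x hx r hr
      have hcx : Tendsto (fun z => -((h z)/M) ^ p) (𝓝[>] x) (𝓝 (-((h x)/M) ^ p)) := by
        have h1 : Tendsto h (𝓝[>] x) (𝓝 (h x)) :=
          ((hcont x hx.1).mono_left (nhdsWithin_mono x (fun z hz => (hx.1.trans hz.le))))
        have h2 : ContinuousAt (fun u : ℝ => -((u / M) ^ p)) (h x) :=
          (((Real.continuousAt_rpow_const _ p (Or.inr hp.le)).comp
            (continuousAt_id.div_const M))).neg
        exact h2.tendsto.comp h1
      have h2 : ∀ᶠ z in 𝓝[>] x, -((h z)/M) ^ p < r := hcx.eventually_lt_const hr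
      have h3 : ∀ᶠ z in 𝓝[>] x, slope h x z ≤ -((h z)/M) ^ p := by
        filter_upwards [self_mem_nhdsWithin] with z hz
        have hz0 : (0:ℝ) ≤ z := hx.1.trans hz.le
        have hsp := hsplit x z hx.1 hz.le
        have hlo := hlow x z hx.1 hz.le
        have hEz : h z / M ≤ E z := by
          rw [div_le_iff₀ hM]
          linarith [hIneq' z hz0]
        have h4 : (h z / M) ^ p ≤ (E z) ^ p :=
          Real.rpow_le_rpow (div_nonneg (hnn z hz0) hM.le) hEz hp.le
        rw [slope_def_field, div_le_iff₀ (sub_pos.2 hz)]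
        have h5 : (z - x) * (h z / M) ^ p ≤ (z - x) * (E z) ^ p :=
          mul_le_mul_of_nonneg_left h4 (by linarith [(mem_Ioi.1 hz).le])
        nlinarith
      exact ((h3.and h2).mono (fun z hz => lt_of_le_of_lt hz.1 hz.2)).frequently
    · -- touching bound
      intro x hx hfx
      have hψx := hψpos x hx.1
      have hlt : (ψ x / M) ^ p < ((ψ x + ε) / M) ^ p := by
        apply Real.rpow_lt_rpow (div_nonneg hψx.le hM.le) _ hp
        gcongr
        linarith
      show -((h x) / M) ^ p < -((ψ x) / M) ^ p
      rw [hfx]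
      linarith
  -- final computation
  intro t ht
  set T : ℝ := M * E 0 ^ (-α) with hTdef
  have hT : 0 < T := mul_pos hM (Real.rpow_pos_of_pos hE0 _)
  have htpos : 0 < t := lt_of_lt_of_le hT ht
  set u : ℝ := M + α * E 0 ^ α * t with hudef
  have hu : 0 < u :=
    add_pos hM (mul_pos (mul_pos hα (Real.rpow_pos_of_pos hE0 α)) htpos)
  set s : ℝ := (t - T) / p with hsdef
  have hs0 : 0 ≤ s := div_nonneg (by linarith) hp.le
  -- abbreviations for rpow facts
  have e3 : E 0 ^ α * E 0 ^ (-α) = 1 := by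
    rw [← Real.rpow_add hE0]; simp
  have eT : E 0 ^ α * T = M := by
    rw [hTdef]; nlinarith [e3]
  have hBu : E 0 ^ (-α) * u = M * E 0 ^ (-α) + α * t := by
    rw [hudef]
    linear_combination (α * t) * e3
  have ht_s : t - s = E 0 ^ (-α) * (u / p) := by
    have h2 : t - s = (M * E 0 ^ (-α) + α * t) / p := by
      rw [hsdef, hTdef, hpdef]
      field_simp
      ring
    rw [h2, mul_div_assoc' _ u p, hBu]
  have hts : 0 < t - s := by
    rw [ht_s]
    exact mul_pos (Real.rpow_pos_of_pos hE0 _) (div_pos hu hp)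
  have hst : s ≤ t := by linarith
  have hbase_eq : c + k * s = M ^ (-p) * E 0 ^ (-α) * (u / p) := by
    have e1 : c = M ^ (-α) * E 0 ^ (-α) := Real.mul_rpow hM.le hE0'
    have e2 : M ^ (-α) = M ^ (-p) * M := by
      rw [← Real.rpow_add_one hM.ne' (-p)]
      norm_num [hpdef]
    have step : c + k * s = M ^ (-p) * (M * E 0 ^ (-α) + α * t) / p := by
      rw [e1, e2, hkdef, hsdef, hTdef, hpdef]
      field_simp
      ring
    rw [step, show M ^ (-p) * E 0 ^ (-α) * (u / p) = M ^ (-p) * (E 0 ^ (-α) * u) / p by ring,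
      hBu]
  set D : ℝ := E 0 * (M * p / u) ^ (1 / α) with hDdef
  have hD : 0 < D :=
    mul_pos hE0 (Real.rpow_pos_of_pos (div_pos (mul_pos hM hp) hu) _)
  have hψs_eq : ψ s = (t - s) * D ^ p := by
    have hb := hbase s hs0
    apply Real.log_injOn_pos (mem_Ioi.2 (hψpos s hs0))
      (mem_Ioi.2 (mul_pos hts (Real.rpow_pos_of_pos hD _)))
    have l1 : Real.log (c + k * s) =
        -p * Real.log M + -α * Real.log (E 0) + (Real.log u - Real.log p) := by
      rw [hbase_eq, Real.log_mul (by positivity) (by positivity),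
        Real.log_mul (by positivity) (by positivity),
        Real.log_div hu.ne' hp.ne', Real.log_rpow hM, Real.log_rpow hE0]
    have l2 : Real.log (t - s) =
        -α * Real.log (E 0) + (Real.log u - Real.log p) := by
      rw [ht_s, Real.log_mul (by positivity) (by positivity),
        Real.log_div hu.ne' hp.ne', Real.log_rpow hE0]
    have l3 : Real.log D =
        Real.log (E 0) + (1/α) * (Real.log M + Real.log p - Real.log u) := by
      rw [hDdef, Real.log_mul hE0.ne' (by positivity),
        Real.log_rpow (div_pos (mul_pos hM hp) hu),
        Real.log_div (mul_pos hM hp).ne' hu.ne', Real.log_mul hM.ne' hp.ne']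
    show Real.log ((c + k * s) ^ (-(1/α))) = _
    rw [Real.log_rpow hb, l1,
      Real.log_mul hts.ne' (Real.rpow_pos_of_pos hD _).ne',
      Real.log_rpow hD, l2, l3, hpdef]
    field_simp
    ring
  -- put it together
  have h1 := hlow s t hs0 hst
  have h2 := hsplit s t hs0 hst
  have h3 := hcomp s hs0
  have h4 := hnn t htpos.le
  have h5 : (t - s) * E t ^ p ≤ (t - s) * D ^ p := by
    rw [← hψs_eq]; linarith
  have h6 : E t ^ p ≤ D ^ p := le_of_mul_le_mul_left h5 hts
  show E t ≤ D
  by_contra hlt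
  push_neg at hlt
  have := Real.rpow_lt_rpow hD.le hlt hp
  linarith
end

section
/- Let E : [0,∞) → [0,∞) be a non-increasing function and T > 0 a constant such that ∫_t^∞ E(s) ds ≤ T·E(t) for all t ≥ 0. Then E(t) ≤ E(0)·e^{1 - t/T} for all t ≥ T. -/
/-!
Let `F t = ∫_t^∞ E`. Since `E` is non-increasing, `F t ≥ (u - t) E u + F u ≥ (1 + (u - t)/T) F u`
for `t ≤ u`; iterating this over `n` equal steps and letting `n → ∞` gives
`F u ≤ e^{-u/T} F 0 ≤ T e^{-u/T} E 0`. Taking `u = t - T` and using `T E t ≤ F (t - T)` once more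
yields the bound.
-/

open Real MeasureTheory Set Filter Topology

theorem sub_mul_add_integral_Ioi_le_integral_Ioi {E : ℝ → ℝ} {t u : ℝ} (htu : t ≤ u)
    (hE : AntitoneOn E (Icc t u)) (hint : IntegrableOn E (Ioi t)) :
    (u - t) * E u + ∫ s in Ioi u, E s ≤ ∫ s in Ioi t, E s := by
  have hbox : (u - t) * E u ≤ ∫ s in Ioc t u, E s := by
    have h := setIntegral_ge_of_const_le_real (c := E u) measurableSet_Ioc
      (by simp [Real.volume_Ioc]) (fun x hx => hE (Ioc_subset_Icc_self hx)
        (right_mem_Icc.2 htu) hx.2) (hint.mono_set Ioc_subset_Ioi_self)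
    rwa [Real.volume_real_Ioc_of_le htu, mul_comm] at h
  rw [← Ioc_union_Ioi_eq_Ioi htu, setIntegral_union (Ioc_disjoint_Ioi le_rfl) measurableSet_Ioi
    (hint.mono_set Ioc_subset_Ioi_self) (hint.mono_set (Ioi_subset_Ioi htu))]
  linarith

theorem one_add_inv_mul_mul_integral_Ioi_le {E : ℝ → ℝ} {T t u : ℝ} (hT : 0 < T) (htu : t ≤ u)
    (hE : AntitoneOn E (Icc t u)) (hint : IntegrableOn E (Ioi t))
    (hbound : ∫ s in Ioi u, E s ≤ T * E u) :
    (1 + T⁻¹ * (u - t)) * ∫ s in Ioi u, E s ≤ ∫ s in Ioi t, E s := by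
  have hgain : T⁻¹ * (u - t) * ∫ s in Ioi u, E s ≤ (u - t) * E u := calc
    _ ≤ T⁻¹ * (u - t) * (T * E u) := by gcongr
    _ = (u - t) * E u := by field_simp
  linarith [sub_mul_add_integral_Ioi_le_integral_Ioi htu hE hint]

theorem one_add_mul_pow_mul_le {F : ℝ → ℝ} {c s : ℝ} (hc : 0 ≤ c) (hs : 0 ≤ s)
    (hF : ∀ t ≥ 0, ∀ s ≥ 0, (1 + c * s) * F (t + s) ≤ F t) (n : ℕ) :
    (1 + c * s) ^ n * F (n * s) ≤ F 0 := by
  induction n with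
  | zero => simp
  | succ n ih =>
    calc (1 + c * s) ^ (n + 1) * F ((n + 1 : ℕ) * s)
        = (1 + c * s) ^ n * ((1 + c * s) * F (n * s + s)) := by push_cast; ring_nf
      _ ≤ (1 + c * s) ^ n * F (n * s) := by gcongr; exact hF _ (by positivity) s hs
      _ ≤ F 0 := ih

theorem mul_exp_le_of_one_add_mul_le {F : ℝ → ℝ} {c u : ℝ} (hc : 0 ≤ c) (hu : 0 ≤ u)
    (hF : ∀ t ≥ 0, ∀ s ≥ 0, (1 + c * s) * F (t + s) ≤ F t) :
    F u * exp (c * u) ≤ F 0 := by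
  have hlim : Tendsto (fun n : ℕ => F u * (1 + c * u / n) ^ n) atTop (𝓝 (F u * exp (c * u))) :=
    (tendsto_one_add_div_pow_exp (c * u)).const_mul _
  refine le_of_tendsto hlim (eventually_atTop.2 ⟨1, fun n hn => ?_⟩)
  have h := one_add_mul_pow_mul_le hc (div_nonneg hu n.cast_nonneg) hF n
  rwa [mul_div_cancel₀ u (by positivity), ← mul_div_assoc, mul_comm] at h

theorem stmt_3 (E : ℝ → ℝ) (T : ℝ)
    (hE_nonneg : ∀ t ≥ (0:ℝ), 0 ≤ E t)
    (hE_anti : AntitoneOn E (Set.Ici 0))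
    (hT : 0 < T)
    (hInt : ∀ t ≥ (0:ℝ), IntegrableOn E (Set.Ioi t))
    (hIneq : ∀ t ≥ (0:ℝ), ∫ s in Set.Ioi t, E s ≤ T * E t) :
    ∀ t ≥ T, E t ≤ E 0 * Real.exp (1 - t / T) := by
  intro t ht
  set F : ℝ → ℝ := fun t => ∫ s in Ioi t, E s
  have hanti : ∀ t ≥ 0, ∀ u, AntitoneOn E (Icc t u) := fun t ht u =>
    hE_anti.mono (Icc_subset_Ici_self.trans (Ici_subset_Ici.2 ht))
  have hstep : ∀ t ≥ 0, ∀ s ≥ 0, (1 + T⁻¹ * s) * F (t + s) ≤ F t := fun t ht s hs => by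
    simpa using one_add_inv_mul_mul_integral_Ioi_le hT (le_add_of_nonneg_right hs)
      (hanti t ht _) (hInt t ht) (hIneq _ (by positivity))
  have hdecay : F (t - T) * exp (T⁻¹ * (t - T)) ≤ F 0 :=
    mul_exp_le_of_one_add_mul_le (inv_nonneg.2 hT.le) (sub_nonneg.2 ht) hstep
  have hlast : T * E t ≤ F (t - T) := by
    have hFt : 0 ≤ F t := setIntegral_nonneg measurableSet_Ioi fun s hs =>
      hE_nonneg s (hT.le.trans (ht.trans hs.le))
    have h := sub_mul_add_integral_Ioi_le_integral_Ioi (sub_le_self t hT.le)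
      (hanti _ (sub_nonneg.2 ht) t) (hInt _ (sub_nonneg.2 ht))
    rw [sub_sub_cancel] at h
    linarith
  have hexp : 1 - t / T = -(T⁻¹ * (t - T)) := by field_simp; ring
  rw [hexp, exp_neg, ← div_eq_mul_inv, le_div_iff₀ (exp_pos _)]
  refine le_of_mul_le_mul_left ?_ hT
  calc T * (E t * exp (T⁻¹ * (t - T))) ≤ F (t - T) * exp (T⁻¹ * (t - T)) := by
        rw [← mul_assoc]; gcongr
    _ ≤ F 0 := hdecay
    _ ≤ T * E 0 := hIneq 0 le_rfl
end

section
/- Let H be a strictly convex, strictly increasing C¹ function on [0, r₀²] with H(0) = H'(0) = 0 and H(x) > 0 for x > 0. Define Ĥ on ℝ by Ĥ(x) = H(x) for x ∈ [0, r₀²] and Ĥ(x) = +∞ otherwise, let Ĥ* be its convex conjugate, and define L(y) = Ĥ*(y)/y for y > 0 and L(0) = 0. Then L : [0,∞) → [0, r₀²) is continuous, strictly increasing, and bijective onto [0, r₀²), and moreover 0 < L(H'(r₀²)) < r₀². -/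
/-!
Since `y ↦ x y - H x` is `x`-Lipschitz for `x ∈ [0, c]`, the conjugate `Ĥ*` is `c`-Lipschitz, so
`L` is continuous away from `0`. For `y > 0` the supremum defining `Ĥ*(y)` is attained at some
`x_y`, and `H(0) = H'(0) = 0` makes `Ĥ*(y) > 0`, which forces `x_y > 0`; hence
`L(y) = x_y - H(x_y) / y` lies in `(0, x_y) ⊆ (0, c)`, and testing the same `x_y` at a larger `y`
shows that `L` is strictly increasing. As `y → 0⁺`, a maximizer `x_y ≥ ε` would give `Ĥ*(y) < 0`
because `H` is bounded below by a positive constant on `[ε, c]`; so `L(y) ≤ x_y → 0`. Testing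
`x = c` gives `L(y) ≥ c - H(c) / y → c`, and the intermediate value theorem yields surjectivity.
Finally, convexity bounds `H'(c)` below by the secant slope `H(c) / c > 0`.
-/

open Real Set Filter Topology

/-- `Ĥ*` for `Ĥ = H` on `[0, c]` and `Ĥ = +∞` elsewhere. -/
noncomputable def restrictedConj (H : ℝ → ℝ) (c y : ℝ) : ℝ :=
  sSup ((fun x => x * y - H x) '' Icc 0 c)

/-- The quotient `L(y) = Ĥ*(y) / y`; Lean's `y / 0 = 0` gives `L(0) = 0`. -/
noncomputable def restrictedConjDiv (H : ℝ → ℝ) (c y : ℝ) : ℝ :=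
  restrictedConj H c y / y

structure IsFlatPosOn (H : ℝ → ℝ) (c : ℝ) : Prop where
  pos : 0 < c
  continuousOn : ContinuousOn H (Icc 0 c)
  map_zero : H 0 = 0
  hasDerivWithinAt_zero : HasDerivWithinAt H 0 (Icc 0 c) 0
  pos_of_mem : ∀ x ∈ Ioc 0 c, 0 < H x

section restrictedConj

variable {H : ℝ → ℝ} {c : ℝ}

lemma isCompact_image_restrictedConj (hH : ContinuousOn H (Icc 0 c)) (y : ℝ) :
    IsCompact ((fun x => x * y - H x) '' Icc 0 c) :=
  isCompact_Icc.image_of_continuousOn ((continuousOn_id.mul continuousOn_const).sub hH)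

lemma le_restrictedConj (hH : ContinuousOn H (Icc 0 c)) {x : ℝ} (hx : x ∈ Icc 0 c) (y : ℝ) :
    x * y - H x ≤ restrictedConj H c y :=
  le_csSup (isCompact_image_restrictedConj hH y).bddAbove (mem_image_of_mem _ hx)

lemma exists_restrictedConj_eq (hc : 0 ≤ c) (hH : ContinuousOn H (Icc 0 c)) (y : ℝ) :
    ∃ x ∈ Icc 0 c, x * y - H x = restrictedConj H c y :=
  (isCompact_image_restrictedConj hH y).sSup_mem ((nonempty_Icc.2 hc).image _)

lemma lipschitzWith_restrictedConj (hc : 0 ≤ c) (hH : ContinuousOn H (Icc 0 c)) :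
    LipschitzWith c.toNNReal (restrictedConj H c) :=
  LipschitzWith.of_le_add_mul' c fun a b => by
    obtain ⟨x, hx, hxa⟩ := exists_restrictedConj_eq hc hH a
    have hb := le_restrictedConj hH hx b
    have hx_mul : x * (a - b) ≤ c * dist a b :=
      (mul_le_mul_of_nonneg_left (le_abs_self _) hx.1).trans
        (mul_le_mul_of_nonneg_right hx.2 (abs_nonneg _))
    rw [← hxa]
    linarith

lemma sub_div_le_restrictedConjDiv (hH : ContinuousOn H (Icc 0 c)) {x y : ℝ} (hx : x ∈ Icc 0 c)
    (hy : 0 < y) : x - H x / y ≤ restrictedConjDiv H c y := by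
  rw [restrictedConjDiv, le_div_iff₀ hy, sub_mul, div_mul_cancel₀ _ hy.ne']
  exact le_restrictedConj hH hx y

@[simp]
lemma restrictedConjDiv_zero : restrictedConjDiv H c 0 = 0 :=
  div_zero _

end restrictedConj

namespace IsFlatPosOn

variable {H : ℝ → ℝ} {c : ℝ}

lemma restrictedConj_pos (hH : IsFlatPosOn H c) {y : ℝ} (hy : 0 < y) :
    0 < restrictedConj H c y := by
  have := left_nhdsWithin_Ioc_neBot hH.pos
  have hslope : ∀ᶠ x in 𝓝[Ioc 0 c] 0, slope H 0 x < y :=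
    (hH.hasDerivWithinAt_zero.mono Ioc_subset_Icc_self).limsup_slope_le'
      (fun h => lt_irrefl 0 h.1) hy
  obtain ⟨x, hxy, hx⟩ := (hslope.and self_mem_nhdsWithin).exists
  rw [slope_def_field, hH.map_zero, sub_zero, sub_zero, div_lt_iff₀ hx.1] at hxy
  linarith [le_restrictedConj hH.continuousOn (Ioc_subset_Icc_self hx) y]

lemma restrictedConjDiv_pos (hH : IsFlatPosOn H c) {y : ℝ} (hy : 0 < y) :
    0 < restrictedConjDiv H c y :=
  div_pos (hH.restrictedConj_pos hy) hy

lemma exists_restrictedConjDiv_eq (hH : IsFlatPosOn H c) {y : ℝ} (hy : 0 < y) :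
    ∃ x ∈ Ioc 0 c, x - H x / y = restrictedConjDiv H c y := by
  obtain ⟨x, hx, hxy⟩ := exists_restrictedConj_eq hH.pos.le hH.continuousOn y
  have hx0 : x ≠ 0 := by
    rintro rfl
    have := hH.restrictedConj_pos hy
    rw [← hxy, hH.map_zero] at this
    simp at this
  refine ⟨x, ⟨hx.1.lt_of_ne' hx0, hx.2⟩, ?_⟩
  rw [restrictedConjDiv, ← hxy, sub_div, mul_div_cancel_right₀ _ hy.ne']

lemma restrictedConjDiv_lt (hH : IsFlatPosOn H c) {y : ℝ} (hy : 0 < y) :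
    restrictedConjDiv H c y < c := by
  obtain ⟨x, hx, hxy⟩ := hH.exists_restrictedConjDiv_eq hy
  have := div_pos (hH.pos_of_mem x hx) hy
  linarith [hx.2]

lemma strictMonoOn_restrictedConjDiv (hH : IsFlatPosOn H c) :
    StrictMonoOn (restrictedConjDiv H c) (Ici 0) := by
  intro a ha b _ hab
  obtain rfl | ha := (mem_Ici.1 ha).eq_or_lt
  · simpa using hH.restrictedConjDiv_pos hab
  obtain ⟨x, hx, hxa⟩ := hH.exists_restrictedConjDiv_eq ha
  have hb := sub_div_le_restrictedConjDiv hH.continuousOn (Ioc_subset_Icc_self hx) (ha.trans hab)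
  have := div_lt_div_of_pos_left (hH.pos_of_mem x hx) ha hab
  linarith

lemma restrictedConjDiv_lt_of_forall_lt (hH : IsFlatPosOn H c) {e y : ℝ} (hy : 0 < y)
    (he : ∀ x ∈ Icc e c, c * y < H x) : restrictedConjDiv H c y < e := by
  obtain ⟨x, hx, hxy⟩ := hH.exists_restrictedConjDiv_eq hy
  have hHx := div_pos (hH.pos_of_mem x hx) hy
  by_contra! hex
  have : x < H x / y := by
    rw [lt_div_iff₀ hy]
    nlinarith [he x ⟨by linarith, hx.2⟩, hx.2]
  linarith [hH.restrictedConjDiv_pos hy]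

lemma tendsto_restrictedConjDiv_nhdsGT_zero (hH : IsFlatPosOn H c) :
    Tendsto (restrictedConjDiv H c) (𝓝[>] 0) (𝓝 0) := by
  refine tendsto_order.2 ⟨fun a ha => ?_, fun e he => ?_⟩
  · filter_upwards [self_mem_nhdsWithin] with y hy using ha.trans (hH.restrictedConjDiv_pos hy)
  have hec : 0 < min e c := lt_min he hH.pos
  obtain ⟨x₀, hx₀, hmin⟩ := isCompact_Icc.exists_isMinOn (nonempty_Icc.2 (min_le_right e c))
    (hH.continuousOn.mono (Icc_subset_Icc_left hec.le))
  have hHx₀ : 0 < H x₀ := hH.pos_of_mem x₀ ⟨hec.trans_le hx₀.1, hx₀.2⟩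
  filter_upwards [self_mem_nhdsWithin,
    nhdsWithin_le_nhds (eventually_lt_nhds (div_pos hHx₀ hH.pos))] with y hy hyc
  refine (hH.restrictedConjDiv_lt_of_forall_lt hy fun x hx => ?_).trans_le (min_le_left e c)
  exact ((lt_div_iff₀' hH.pos).1 hyc).trans_le (isMinOn_iff.1 hmin x hx)

lemma continuousOn_restrictedConjDiv (hH : IsFlatPosOn H c) :
    ContinuousOn (restrictedConjDiv H c) (Ici 0) := by
  intro y hy
  obtain rfl | hy := (mem_Ici.1 hy).eq_or_lt
  · rw [← continuousWithinAt_Ioi_iff_Ici, ContinuousWithinAt, restrictedConjDiv_zero]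
    exact hH.tendsto_restrictedConjDiv_nhdsGT_zero
  · exact ((lipschitzWith_restrictedConj hH.pos.le hH.continuousOn).continuous.continuousAt.div
      continuousAt_id hy.ne').continuousWithinAt

lemma surjOn_restrictedConjDiv (hH : IsFlatPosOn H c) :
    SurjOn (restrictedConjDiv H c) (Ici 0) (Ico 0 c) := by
  intro v ⟨hv0, hvc⟩
  set M := H c / (c - v) + 1
  have hcv : 0 < c - v := sub_pos.2 hvc
  have hM : 0 < M := by
    have := hH.pos_of_mem c ⟨hH.pos, le_rfl⟩
    positivity
  have hvM : v ≤ restrictedConjDiv H c M := by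
    refine le_trans ?_ (sub_div_le_restrictedConjDiv hH.continuousOn ⟨hH.pos.le, le_rfl⟩ hM)
    rw [le_sub_iff_add_le, ← le_sub_iff_add_le', div_le_iff₀ hM]
    have : H c = (c - v) * (M - 1) := by
      simp only [M, add_sub_cancel_right]
      field_simp
    nlinarith
  obtain ⟨y, hy, hyv⟩ := intermediate_value_Icc hM.le
    (hH.continuousOn_restrictedConjDiv.mono Icc_subset_Ici_self) ⟨by simpa using hv0, hvM⟩
  exact ⟨y, hy.1, hyv⟩

lemma bijOn_restrictedConjDiv (hH : IsFlatPosOn H c) :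
    BijOn (restrictedConjDiv H c) (Ici 0) (Ico 0 c) := by
  refine ⟨fun y hy => ?_, hH.strictMonoOn_restrictedConjDiv.injOn, hH.surjOn_restrictedConjDiv⟩
  obtain rfl | hy := (mem_Ici.1 hy).eq_or_lt
  · simpa using hH.pos
  · exact ⟨(hH.restrictedConjDiv_pos hy).le, hH.restrictedConjDiv_lt hy⟩

lemma pos_of_hasDerivWithinAt_right (hH : IsFlatPosOn H c) (hconv : ConvexOn ℝ (Icc 0 c) H)
    {d : ℝ} (hd : HasDerivWithinAt H d (Icc 0 c) c) : 0 < d := by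
  have hslope := hconv.slope_le_of_hasDerivWithinAt ⟨le_rfl, hH.pos.le⟩ ⟨hH.pos.le, le_rfl⟩
    hH.pos hd
  rw [slope_def_field, hH.map_zero, sub_zero, sub_zero] at hslope
  exact (div_pos (hH.pos_of_mem c ⟨hH.pos, le_rfl⟩) hH.pos).trans_le hslope

end IsFlatPosOn

theorem stmt_9_general (r₀ : ℝ) (hr₀ : r₀ ∈ Set.Ioc (0:ℝ) 1)
    (H H' : ℝ → ℝ)
    (hconv : StrictConvexOn ℝ (Set.Icc 0 (r₀ ^ 2)) H)
    (hC1 : ∀ x ∈ Set.Icc (0:ℝ) (r₀ ^ 2),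
      HasDerivWithinAt H (H' x) (Set.Icc 0 (r₀ ^ 2)) x)
    (hH0 : H 0 = 0) (hH'0 : H' 0 = 0)
    (hHpos : ∀ x ∈ Set.Ioc (0:ℝ) (r₀ ^ 2), 0 < H x)
    (L : ℝ → ℝ)
    (hL : ∀ y > (0:ℝ),
      L y = sSup ((fun x => x * y - H x) '' Set.Icc (0:ℝ) (r₀ ^ 2)) / y)
    (hL0 : L 0 = 0) :
    ContinuousOn L (Set.Ici 0) ∧
    StrictMonoOn L (Set.Ici 0) ∧
    Set.BijOn L (Set.Ici 0) (Set.Ico 0 (r₀ ^ 2)) ∧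
    0 < L (H' (r₀ ^ 2)) ∧ L (H' (r₀ ^ 2)) < r₀ ^ 2 := by
  have hc : 0 < r₀ ^ 2 := pow_pos hr₀.1 2
  have hH : IsFlatPosOn H (r₀ ^ 2) :=
    ⟨hc, fun x hx => (hC1 x hx).continuousWithinAt, hH0,
      by simpa [hH'0] using hC1 0 ⟨le_rfl, hc.le⟩, hHpos⟩
  have hLeq : EqOn (restrictedConjDiv H (r₀ ^ 2)) L (Ici 0) := fun y hy => by
    obtain rfl | hy := (mem_Ici.1 hy).eq_or_lt
    · rw [hL0, restrictedConjDiv_zero]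
    · exact (hL y hy).symm
  have hd := hH.pos_of_hasDerivWithinAt_right hconv.convexOn (hC1 _ ⟨hc.le, le_rfl⟩)
  rw [← hLeq (mem_Ici.2 hd.le)]
  exact ⟨hH.continuousOn_restrictedConjDiv.congr hLeq.symm,
    hH.strictMonoOn_restrictedConjDiv.congr hLeq, hH.bijOn_restrictedConjDiv.congr hLeq,
    hH.restrictedConjDiv_pos hd, hH.restrictedConjDiv_lt hd⟩

theorem stmt_9 (r₀ : ℝ) (hr₀ : r₀ ∈ Set.Ioc (0:ℝ) 1)
    (H H' : ℝ → ℝ)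
    (hconv : StrictConvexOn ℝ (Set.Icc 0 (r₀ ^ 2)) H)
    (hC1 : ∀ x ∈ Set.Icc (0:ℝ) (r₀ ^ 2),
      HasDerivWithinAt H (H' x) (Set.Icc 0 (r₀ ^ 2)) x)
    (hH'cont : ContinuousOn H' (Set.Icc 0 (r₀ ^ 2)))
    (hH0 : H 0 = 0) (hH'0 : H' 0 = 0)
    (hHpos : ∀ x ∈ Set.Ioc (0:ℝ) (r₀ ^ 2), 0 < H x)
    (hHmono : StrictMonoOn H (Set.Icc 0 (r₀ ^ 2)))
    (L : ℝ → ℝ)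
    (hL : ∀ y > (0:ℝ),
      L y = sSup ((fun x => x * y - H x) '' Set.Icc (0:ℝ) (r₀ ^ 2)) / y)
    (hL0 : L 0 = 0) :
    ContinuousOn L (Set.Ici 0) ∧
    StrictMonoOn L (Set.Ici 0) ∧
    Set.BijOn L (Set.Ici 0) (Set.Ico 0 (r₀ ^ 2)) ∧
    0 < L (H' (r₀ ^ 2)) ∧ L (H' (r₀ ^ 2)) < r₀ ^ 2 :=
  stmt_9_general r₀ hr₀ H H' hconv hC1 hH0 hH'0 hHpos L hL hL0
end

section
/- Let x(t) = (H')^{-1}(κM/t) where H(x) = √x·e^{-1/x} (so H'(x) = (e^{-1/x}/√x)(1/2 + 1/x)) and κ, M > 0. Then x(t)·(ln t) → 1 as t → ∞; i.e., x(t) is asymptotically equivalent to 1/ln(t) as t → ∞. -/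
open Real Filter Topology

/-! Taking logarithms in `H'(x) = κM/t` and multiplying by `x` gives
`x log t = 1 + O(x) + O(x log x) + O(x log (x + 2))`, and every error term vanishes as `x → 0`. -/

lemma log_exp_neg_inv_div_sqrt_mul {y : ℝ} (hy : 0 < y) :
    log (exp (-1 / y) / √y * (1 / 2 + 1 / y)) = -1 / y - 3 / 2 * log y + log (y + 2) - log 2 := by
  have hsum : 1 / 2 + 1 / y = (y + 2) / (2 * y) := by field_simp
  rw [log_mul (by positivity) (by positivity), log_div (exp_ne_zero _) (by positivity), log_exp,
    log_sqrt hy.le, hsum, log_div (by positivity) (by positivity), log_mul two_ne_zero hy.ne']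
  ring

lemma mul_log_eq_of_exp_neg_inv_div_sqrt_mul_eq {y t c : ℝ} (hy : 0 < y) (ht : 0 < t) (hc : 0 < c)
    (h : exp (-1 / y) / √y * (1 / 2 + 1 / y) = c / t) :
    y * log t = 1 + y * (log c + log 2) + 3 / 2 * (y * log y) - y * log (y + 2) := by
  have hlog := congrArg log h
  rw [log_exp_neg_inv_div_sqrt_mul hy, log_div hc.ne' ht.ne'] at hlog
  have hlogt : log t = log c + 1 / y + 3 / 2 * log y - log (y + 2) + log 2 := by
    rw [neg_div] at hlog
    linarith
  rw [hlogt]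
  field_simp
  ring

lemma tendsto_one_add_mul_log (a : ℝ) :
    Tendsto (fun y => 1 + y * a + 3 / 2 * (y * log y) - y * log (y + 2)) (𝓝 0) (𝓝 1) := by
  have hcont : ContinuousAt (fun y => 1 + y * a + 3 / 2 * (y * log y) - y * log (y + 2)) 0 := by
    have hmul_log : ContinuousAt (fun y => y * log y) 0 := continuous_mul_log.continuousAt
    fun_prop (disch := norm_num)
  simpa using hcont.tendsto

theorem stmt_15 (κ M : ℝ) (hκ : 0 < κ) (hM : 0 < M)
    (Hd : ℝ → ℝ)
    (hHd : ∀ x > (0:ℝ), Hd x = Real.exp (-1 / x) / Real.sqrt x * (1 / 2 + 1 / x))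
    (x : ℝ → ℝ)
    (hxpos : ∀ᶠ t in atTop, 0 < x t)
    (hxlim : Tendsto x atTop (nhds 0))
    (hxeq : ∀ᶠ t in atTop, Hd (x t) = κ * M / t) :
    Tendsto (fun t => x t * Real.log t) atTop (nhds 1) := by
  refine ((tendsto_one_add_mul_log (log (κ * M) + log 2)).comp hxlim).congr' ?_
  filter_upwards [hxpos, hxeq, eventually_gt_atTop 0] with t hx heq ht
  rw [hHd _ hx] at heq
  exact (mul_log_eq_of_exp_neg_inv_div_sqrt_mul_eq hx ht (mul_pos hκ hM) heq).symm
end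

section
/- Let p > 2, H(x) = √x·e^{-(ln(1/√x))^p} and x(t) = (H')^{-1}(κM/t) for κ, M > 0. Then x(t) is asymptotically equivalent to e^{-2(ln t)^{1/p}} as t → ∞, in the sense that ln(x(t))/(−2(ln t)^{1/p}) → 1 as t → ∞. -/
open Real Filter Topology Asymptotics

/-!
Write `y = log (1/√x) = -(log x)/2`. Taking logarithms in `H'(x(t)) = κM/t` gives
`log t = y^p - y + log (2κM) - log (1 + p y^(p-1))`, and since `y → ∞` as `x → 0`, this is
`log t ~ y^p`. Taking `p`-th roots, `y ~ (log t)^(1/p)`, i.e. `log x(t) ~ -2 (log t)^(1/p)`.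
-/

theorem isLittleO_rpow_rpow_atTop {a b : ℝ} (hab : a < b) :
    (fun s : ℝ => s ^ a) =o[atTop] fun s => s ^ b := by
  refine (isLittleO_iff_tendsto' ?_).mpr ?_
  · filter_upwards [eventually_gt_atTop 0] with s hs h
    exact absurd h (rpow_pos_of_pos hs b).ne'
  · have : Tendsto (fun s : ℝ => s ^ (-(b - a))) atTop (𝓝 0) :=
      tendsto_rpow_neg_atTop (by linarith)
    refine this.congr' ?_
    filter_upwards [eventually_gt_atTop 0] with s hs
    rw [neg_sub, rpow_sub hs]

theorem isEquivalent_rpow_sub_log_one_add_rpow {p : ℝ} (hp : 1 < p) (c : ℝ) :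
    (fun s : ℝ => s ^ p - s + c - log (1 + p * s ^ (p - 1))) ~[atTop] fun s => s ^ p := by
  have hp0 : 0 < p := by linarith
  have hid : (fun s : ℝ => s) =o[atTop] fun s => s ^ p := by
    simpa only [rpow_one] using isLittleO_rpow_rpow_atTop hp
  have hnorm : Tendsto (norm ∘ fun s : ℝ => s ^ p) atTop atTop :=
    tendsto_norm_atTop_atTop.comp (tendsto_rpow_atTop hp0)
  have hlog : (fun s : ℝ => log (1 + p * s ^ (p - 1))) =o[atTop] fun s => s ^ p := by
    refine (IsBigO.of_bound 1 ?_).trans_isLittleO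
      ((isLittleO_rpow_rpow_atTop (sub_one_lt p)).const_mul_left p)
    filter_upwards [eventually_gt_atTop 0] with s hs
    have hu : 0 ≤ p * s ^ (p - 1) := by positivity
    rw [one_mul, norm_of_nonneg (log_nonneg (by linarith)), norm_of_nonneg hu]
    linarith [log_le_sub_one_of_pos (by linarith : 0 < 1 + p * s ^ (p - 1))]
  exact ((IsEquivalent.refl.sub_isLittleO hid).add_const_of_norm_tendsto_atTop hnorm).sub_isLittleO
    hlog

theorem Asymptotics.IsEquivalent.rpow_inv_of_isEquivalent_rpow {α : Type*} {l : Filter α}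
    {u y : α → ℝ} {p : ℝ} (hp : p ≠ 0) (hy : ∀ᶠ t in l, 0 ≤ y t) (h : u ~[l] fun t => y t ^ p) :
    (fun t => u t ^ p⁻¹) ~[l] y := by
  -- `IsEquivalent.rpow` wants the comparison function nonnegative everywhere, not just eventually.
  have habs : u ~[l] fun t => |y t| ^ p :=
    h.congr_right (by filter_upwards [hy] with t ht; rw [abs_of_nonneg ht])
  refine (habs.rpow (fun t => by positivity) (r := p⁻¹)).congr_right ?_
  filter_upwards [hy] with t ht
  simp only [Pi.pow_apply]
  rw [rpow_rpow_inv (abs_nonneg _) hp, abs_of_nonneg ht]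

theorem log_derivH_eq {p x : ℝ} (hp : 0 ≤ p) (hx : 0 < x) (hx1 : x ≤ 1) :
    log (exp (-(log (1 / √x)) ^ p) / (2 * √x) * (1 + p * (log (1 / √x)) ^ (p - 1))) =
      log (1 / √x) - (log (1 / √x)) ^ p - log 2 + log (1 + p * (log (1 / √x)) ^ (p - 1)) := by
  have hsx : 0 < √x := sqrt_pos.mpr hx
  have hlogsx : log √x = -log (1 / √x) := by rw [one_div, log_inv, neg_neg]
  have hy : 0 ≤ log (1 / √x) :=
    log_nonneg (one_le_one_div hsx (sqrt_le_one.mpr hx1))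
  have hB : 0 < 1 + p * (log (1 / √x)) ^ (p - 1) := by positivity
  rw [log_mul (by positivity) hB.ne', log_div (exp_ne_zero _) (by positivity), log_exp,
    log_mul two_ne_zero hsx.ne', hlogsx]
  ring

theorem stmt_16 (p κ M : ℝ) (hp : 2 < p) (hκ : 0 < κ) (hM : 0 < M)
    (Hd : ℝ → ℝ)
    (hHd : ∀ x > (0:ℝ),
      Hd x = Real.exp (-(Real.log (1 / Real.sqrt x)) ^ p) / (2 * Real.sqrt x) *
        (1 + p * (Real.log (1 / Real.sqrt x)) ^ (p - 1)))
    (x : ℝ → ℝ)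
    (hxpos : ∀ᶠ t in atTop, 0 < x t)
    (hxlim : Tendsto x atTop (nhds 0))
    (hxeq : ∀ᶠ t in atTop, Hd (x t) = κ * M / t) :
    Tendsto (fun t => Real.log (x t) / (-2 * (Real.log t) ^ ((1:ℝ) / p)))
      atTop (nhds 1) := by
  have hp0 : 0 < p := by linarith
  set y : ℝ → ℝ := fun t => log (1 / √(x t)) with hy
  have hlogx : ∀ᶠ t in atTop, log (x t) = -2 * y t := by
    filter_upwards [hxpos] with t ht
    simp only [hy, one_div, log_inv, log_sqrt ht.le]
    ring
  have hy_top : Tendsto y atTop atTop := by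
    have hlog : Tendsto (fun t => log (x t)) atTop atBot :=
      tendsto_log_nhdsGT_zero.comp (tendsto_nhdsWithin_of_tendsto_nhds_of_eventually_within x
        hxlim hxpos)
    refine ((tendsto_neg_atBot_atTop.comp hlog).atTop_div_const two_pos).congr' ?_
    filter_upwards [hlogx] with t ht
    simp only [Function.comp_apply, ht]
    ring
  have hlogt : ∀ᶠ t in atTop,
      y t ^ p - y t + (log (κ * M) + log 2) - log (1 + p * y t ^ (p - 1)) = log t := by
    filter_upwards [hxpos, hxlim.eventually (gt_mem_nhds one_pos), hxeq,
      eventually_gt_atTop 0] with t hx hx1 heq ht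
    have h := log_derivH_eq hp0.le hx hx1.le
    rw [← hHd _ hx, heq, log_div (by positivity) ht.ne'] at h
    linarith
  have hequiv : (fun t => log t) ~[atTop] fun t => y t ^ p :=
    ((isEquivalent_rpow_sub_log_one_add_rpow (by linarith) _).comp_tendsto hy_top).congr_left
      hlogt
  have hroot : (fun t => log t ^ p⁻¹) ~[atTop] y :=
    hequiv.rpow_inv_of_isEquivalent_rpow hp0.ne' (hy_top.eventually_ge_atTop 0)
  have hne : ∀ᶠ t in atTop, log t ^ p⁻¹ ≠ 0 := by
    filter_upwards [eventually_gt_atTop 1] with t ht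
    exact (rpow_pos_of_pos (log_pos ht) _).ne'
  refine ((isEquivalent_iff_tendsto_one hne).mp hroot.symm).congr' ?_
  filter_upwards [hlogx] with t ht
  rw [Pi.div_apply, ht, one_div, mul_div_mul_left _ _ (by norm_num : (-2:ℝ) ≠ 0)]
end

section
/- Let p > 2, q > 1, H(x) = x^{(p+1)/2}·(ln(1/√x))^q, and x(t) = (H')^{-1}(κM/t) for constants κ, M > 0. Then there exists an explicit constant D > 0 (depending on κ, M, p, q) such that x(t)/(D·t^{-2/(p-1)}·(ln t)^{-2q/(p-1)}) → 1 as t → ∞. -/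
open Real Set Filter Topology

/-!
Put `α = (p - 1) / 2` and `ℓ = -log x`, which tends to `∞`. Since `log (1 / √x) = ℓ / 2`, the
equation `H'(x) = κ M / t` says `x ^ α * ℓ ^ q * t = 2 ^ (q + 1) κ M / (p + 1 - 2 q / ℓ)`, which tends
to `c = 2 ^ (q + 1) κ M / (p + 1)`. Taking logarithms, `log t = α ℓ + O(log ℓ)`, so
`x * t ^ (1 / α) * (log t) ^ (q / α) = (x ^ α * ℓ ^ q * t) ^ (1 / α) * (log t / ℓ) ^ (q / α)`
tends to `D = c ^ (1 / α) * α ^ (q / α)`.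
-/

section InverseAsymptotics

variable {ι : Type*} {l : Filter ι} {y : ℝ → ℝ} {α q c : ℝ}

theorem Filter.Tendsto.neg_log_atTop {f : ι → ℝ} (hf : Tendsto f l (𝓝[>] 0)) :
    Tendsto (fun i => -Real.log (f i)) l atTop :=
  tendsto_neg_atBot_atTop.comp (tendsto_log_nhdsGT_zero.comp hf)

theorem tendsto_log_div_neg_log_of_tendsto_rpow_mul (hc : 0 < c)
    (hy : Tendsto y atTop (𝓝[>] 0))
    (hB : Tendsto (fun t => y t ^ α * (-log (y t)) ^ q * t) atTop (𝓝 c)) :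
    Tendsto (fun t => log t / -log (y t)) atTop (𝓝 α) := by
  have hℓ := hy.neg_log_atTop
  have hlogB : Tendsto (fun t => log (y t ^ α * (-log (y t)) ^ q * t)) atTop (𝓝 (log c)) :=
    ((continuousAt_log hc.ne').tendsto.comp hB :)
  have hlim : Tendsto (fun t => α - q * (log (-log (y t)) / -log (y t))
      + log (y t ^ α * (-log (y t)) ^ q * t) * (-log (y t))⁻¹) atTop (𝓝 α) := by
    have hlogℓ := (isLittleO_log_id_atTop.tendsto_div_nhds_zero.comp hℓ).const_mul q
    simpa using (hlogℓ.const_sub α).add (hlogB.mul hℓ.inv_tendsto_atTop)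
  refine hlim.congr' ?_
  filter_upwards [hy.eventually self_mem_nhdsWithin, hℓ.eventually_gt_atTop 0,
    eventually_gt_atTop 0] with t (hyt : 0 < y t) hℓt ht
  rw [log_mul (by positivity) ht.ne', log_mul (by positivity) (by positivity),
    log_rpow hyt, log_rpow hℓt]
  have : log (y t) ≠ 0 := (neg_pos.1 hℓt).ne
  field_simp
  ring

theorem tendsto_mul_rpow_mul_log_rpow_of_tendsto_rpow_mul (hα : 0 < α) (hc : 0 < c)
    (hy : Tendsto y atTop (𝓝[>] 0))
    (hB : Tendsto (fun t => y t ^ α * (-log (y t)) ^ q * t) atTop (𝓝 c)) :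
    Tendsto (fun t => y t * t ^ α⁻¹ * log t ^ (q / α)) atTop
      (𝓝 (c ^ α⁻¹ * α ^ (q / α))) := by
  have hlim := (hB.rpow_const (p := α⁻¹) (Or.inl hc.ne')).mul
    ((tendsto_log_div_neg_log_of_tendsto_rpow_mul hc hy hB).rpow_const
      (p := q / α) (Or.inl hα.ne'))
  refine hlim.congr' ?_
  have hℓ := hy.neg_log_atTop
  filter_upwards [hy.eventually self_mem_nhdsWithin, hℓ.eventually_gt_atTop 0,
    eventually_gt_atTop 1] with t (hyt : 0 < y t) hℓt ht
  have hlogt : 0 < log t := log_pos ht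
  rw [mul_rpow (by positivity) (by positivity), mul_rpow (by positivity) (by positivity),
    ← rpow_mul hyt.le, ← rpow_mul hℓt.le, mul_inv_cancel₀ hα.ne', rpow_one,
    div_rpow hlogt.le hℓt.le, ← div_eq_mul_inv]
  have : 0 < (-log (y t)) ^ (q / α) := by positivity
  field_simp

end InverseAsymptotics

theorem tendsto_div_rpow_neg_of_tendsto_mul_rpow {y : ℝ → ℝ} {a b C : ℝ} (hC : C ≠ 0)
    (h : Tendsto (fun t => y t * t ^ a * log t ^ b) atTop (𝓝 C)) :
    Tendsto (fun t => y t / (C * t ^ (-a) * log t ^ (-b))) atTop (𝓝 1) := by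
  rw [← div_self hC]
  refine (h.div_const C).congr' ?_
  filter_upwards [eventually_gt_atTop 1] with t ht
  have hlogt : 0 < log t := log_pos ht
  rw [rpow_neg (by positivity), rpow_neg hlogt.le]
  have : 0 < t ^ a := by positivity
  have : 0 < log t ^ b := by positivity
  field_simp

theorem log_one_div_sqrt {x : ℝ} (hx : 0 ≤ x) : log (1 / √x) = -log x / 2 := by
  rw [one_div, log_inv, log_sqrt hx, neg_div]

theorem tendsto_rpow_mul_neg_log_rpow_mul_of_eq {p q κ M : ℝ} {x : ℝ → ℝ} (hp : p + 1 ≠ 0)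
    (hx : Tendsto x atTop (𝓝[>] 0))
    (hxeq : ∀ᶠ t in atTop, 1 / 2 * x t ^ ((p - 1) / 2) * (log (1 / √(x t))) ^ q *
      (p + 1 - q * (log (1 / √(x t)))⁻¹) = κ * M / t) :
    Tendsto (fun t => x t ^ ((p - 1) / 2) * (-log (x t)) ^ q * t) atTop
      (𝓝 (2 * 2 ^ q * κ * M / (p + 1))) := by
  have hℓ := hx.neg_log_atTop
  have hfactor : Tendsto (fun t => p + 1 - 2 * q * (-log (x t))⁻¹) atTop (𝓝 (p + 1)) := by
    simpa using (hℓ.inv_tendsto_atTop.const_mul (2 * q)).const_sub (p + 1)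
  refine (tendsto_const_nhds.div hfactor hp).congr' ?_
  filter_upwards [hx.eventually self_mem_nhdsWithin, hℓ.eventually_gt_atTop 0,
    hfactor.eventually_ne hp, eventually_gt_atTop 0, hxeq] with t (hxt : 0 < x t) hℓt hft ht heq
  rw [log_one_div_sqrt hxt.le, div_rpow hℓt.le zero_le_two] at heq
  rw [Pi.div_apply, div_eq_iff hft, eq_comm]
  have : 0 < (2 : ℝ) ^ q := by positivity
  field_simp at heq ⊢
  linear_combination heq

theorem stmt_17_general (p q κ M : ℝ) (hp : 2 < p) (hκ : 0 < κ) (hM : 0 < M)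
    (Hd : ℝ → ℝ)
    (hHd : ∀ x > (0:ℝ),
      Hd x = 1 / 2 * x ^ ((p - 1) / 2) * (Real.log (1 / Real.sqrt x)) ^ q *
        (p + 1 - q * (Real.log (1 / Real.sqrt x))⁻¹))
    (x : ℝ → ℝ)
    (hxpos : ∀ᶠ t in atTop, 0 < x t)
    (hxlim : Tendsto x atTop (nhds 0))
    (hxeq : ∀ᶠ t in atTop, Hd (x t) = κ * M / t) :
    ∃ D > (0:ℝ),
      Tendsto
        (fun t => x t /
          (D * t ^ (-(2 / (p - 1))) * (Real.log t) ^ (-(2 * q / (p - 1)))))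
        atTop (nhds 1) := by
  have hx : Tendsto x atTop (𝓝[>] 0) := tendsto_nhdsWithin_iff.2 ⟨hxlim, hxpos⟩
  have hB := tendsto_rpow_mul_neg_log_rpow_mul_of_eq (p := p) (q := q) (κ := κ) (M := M)
    (by linarith) hx <| by
    filter_upwards [hxpos, hxeq] with t ht heq
    rwa [← hHd _ ht]
  have hα : 0 < (p - 1) / 2 := by linarith
  have hc : 0 < 2 * 2 ^ q * κ * M / (p + 1) := by
    have : 0 < p + 1 := by linarith
    positivity
  have hlim := tendsto_mul_rpow_mul_log_rpow_of_tendsto_rpow_mul hα hc hx hB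
  rw [inv_div, div_div_eq_mul_div, mul_comm q] at hlim
  exact ⟨_, by positivity, tendsto_div_rpow_neg_of_tendsto_mul_rpow (by positivity) hlim⟩

theorem stmt_17 (p q κ M : ℝ) (hp : 2 < p) (hq : 1 < q) (hκ : 0 < κ) (hM : 0 < M)
    (Hd : ℝ → ℝ)
    (hHd : ∀ x > (0:ℝ),
      Hd x = 1 / 2 * x ^ ((p - 1) / 2) * (Real.log (1 / Real.sqrt x)) ^ q *
        (p + 1 - q * (Real.log (1 / Real.sqrt x))⁻¹))
    (x : ℝ → ℝ)
    (hxpos : ∀ᶠ t in atTop, 0 < x t)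
    (hxlim : Tendsto x atTop (nhds 0))
    (hxeq : ∀ᶠ t in atTop, Hd (x t) = κ * M / t) :
    ∃ D > (0:ℝ),
      Tendsto
        (fun t => x t /
          (D * t ^ (-(2 / (p - 1))) * (Real.log t) ^ (-(2 * q / (p - 1)))))
        atTop (nhds 1) :=
  stmt_17_general p q κ M hp hκ hM Hd hHd x hxpos hxlim hxeq
end

section
/- Let E : [0,∞) → [0,∞) be a nonincreasing absolutely continuous function, let η > 0, M > 0, and let w : [0,η) → [0,∞) be strictly increasing, continuous, onto, with w(0)=0, and suppose E takes values in [0,η) and ∫_S^T w(E(t))·E(t) dt ≤ M·E(S) for all 0 ≤ S ≤ T. For r ∈ (0,η) define K_r(τ) = ∫_τ^r dy/(y·w(y)) and ψ_r(z) = z + K_r(w^{-1}(1/z)) for z ≥ 1/w(r). Then for any r ∈ (0,η) with (1/M)·∫_0^∞ E(τ)·w(E(τ)) dτ ≤ r, one has E(t) ≤ w^{-1}(1/ψ_r^{-1}(t/M)) for all t ≥ M/w(r); in particular E(t) → 0 as t → ∞. -/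
open Real Set Filter Topology MeasureTheory intervalIntegral

/-!
The tail `F S = (∫_S^∞ E w(E)) / M` satisfies `F ≤ E` by the integral inequality, hence
`F' = -E w(E) / M ≤ -F w(F) / M`; separating variables in this differential inequality gives
`S ≤ M ∫_{F S}^{r} dy / (y w y)`. As `E w(E)` is nonincreasing,
`∫_S^t E w(E) ≥ (t - S) E(t) w(E(t))`, and the choice `S = t - M / w(E t)` yields `E t ≤ F S`,
so `t / M ≤ 1 / w(E t) + K_r(E t) = ψ_r(1 / w(E t))`; inverting `ψ_r` gives the bound.
Decay to `0` comes from `t E(t) w(E(t)) ≤ ∫_0^∞ E w(E)`.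
-/

theorem hasDerivAt_integral_Ioi {f : ℝ → ℝ} {a x : ℝ} (hf : IntegrableOn f (Ioi a))
    (hx : a < x) (hmeas : StronglyMeasurableAtFilter f (𝓝 x)) (hcont : ContinuousAt f x) :
    HasDerivAt (fun b => ∫ t in Ioi b, f t) (-f x) x := by
  have hsplit : (fun b => (∫ t in Ioi a, f t) - ∫ t in a..b, f t) =ᶠ[𝓝 x]
      fun b => ∫ t in Ioi b, f t := by
    filter_upwards [Ioi_mem_nhds hx] with b hb
    rw [← integral_Ioi_sub_Ioi hf (le_of_lt hb), sub_sub_cancel]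
  have hprim : IntervalIntegrable f volume a x :=
    (intervalIntegrable_iff_integrableOn_Ioc_of_le hx.le).2 (hf.mono_set Ioc_subset_Ioi_self)
  simpa using ((hasDerivAt_const x _).sub
    (integral_hasDerivAt_right hprim hmeas hcont)).congr_of_eventuallyEq hsplit.symm

theorem setIntegral_Ioi_le_of_intervalIntegral_le {f : ℝ → ℝ} {a C : ℝ}
    (hf : IntegrableOn f (Ioi a)) (hC : ∀ b ≥ a, ∫ t in a..b, f t ≤ C) :
    ∫ t in Ioi a, f t ≤ C :=
  le_of_tendsto (intervalIntegral_tendsto_integral_Ioi a hf tendsto_id)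
    (eventually_ge_atTop a |>.mono hC)

theorem mul_le_setIntegral_Ioi_of_antitoneOn {f : ℝ → ℝ} {a b : ℝ} (hab : a ≤ b)
    (hf : IntegrableOn f (Ioi a)) (hanti : AntitoneOn f (Ici a))
    (hnonneg : ∀ x ≥ a, 0 ≤ f x) :
    (b - a) * f b ≤ ∫ t in Ioi a, f t := by
  calc (b - a) * f b = ∫ _ in a..b, f b := by simp
    _ ≤ ∫ t in a..b, f t :=
        integral_mono_on hab intervalIntegrable_const
          ((intervalIntegrable_iff_integrableOn_Ioc_of_le hab).2
            (hf.mono_set Ioc_subset_Ioi_self))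
          fun x hx => hanti hx.1 (hx.1.trans hx.2) hx.2
    _ ≤ ∫ t in Ioi a, f t := by
        rw [integral_of_le hab]
        exact setIntegral_mono_set hf
          ((ae_restrict_iff' measurableSet_Ioi).2 (.of_forall fun x hx => hnonneg x hx.le))
          (.of_forall Ioc_subset_Ioi_self)

theorem antitoneOn_setIntegral_Ioi {f : ℝ → ℝ} {a : ℝ} (hf : IntegrableOn f (Ioi a))
    (hnonneg : ∀ x ≥ a, 0 ≤ f x) : AntitoneOn (fun b => ∫ t in Ioi b, f t) (Ici a) :=
  fun b (hb : a ≤ b) _ _ hbc => setIntegral_mono_set (hf.mono_set (Ioi_subset_Ioi hb))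
    ((ae_restrict_iff' measurableSet_Ioi).2 (.of_forall fun x hx => hnonneg x (hb.trans hx.le)))
    (.of_forall (Ioi_subset_Ioi hbc))

theorem sub_le_integral_of_hasDerivAt_le {f f' φ : ℝ → ℝ} {a b : ℝ} (hab : a ≤ b)
    (hf : ContinuousOn f (Icc a b)) (hff' : ∀ x ∈ Ioo a b, HasDerivAt f (f' x) x)
    (hφ : ∀ x ∈ Ioo a b, 0 < φ (f x)) (hf'φ : ∀ x ∈ Ioo a b, f' x ≤ -φ (f x))
    (hint : IntervalIntegrable (fun y => 1 / φ y) volume (f b) (f a)) :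
    b - a ≤ ∫ y in f b..f a, 1 / φ y := by
  have hIoo : Ioo (min a b) (max a b) = Ioo a b := by rw [min_eq_left hab, max_eq_right hab]
  rw [← uIcc_of_le hab] at hf
  rw [← hIoo] at hff'
  have hf'_nonpos : ∀ x ∈ Ioo (min a b) (max a b), f' x ≤ 0 := fun x hx => by
    rw [hIoo] at hx
    exact (hf'φ x hx).trans (neg_nonpos.2 (hφ x hx).le)
  have hcomp_int := (integrable_comp_mul_deriv_iff_of_deriv_nonpos hf hff' hf'_nonpos).2
    hint.symm
  have hpoint : ∀ x ∈ Ioo a b, ((fun y => 1 / φ y) ∘ f) x * f' x ≤ -1 := fun x hx => by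
    rw [Function.comp_apply, one_div_mul_eq_div, div_le_iff₀ (hφ x hx)]
    linarith [hf'φ x hx]
  calc b - a = -∫ _ in a..b, (-1 : ℝ) := by simp
    _ ≤ -∫ x in a..b, ((fun y => 1 / φ y) ∘ f) x * f' x :=
        neg_le_neg (integral_mono_on_of_le_Ioo hab hcomp_int intervalIntegrable_const hpoint)
    _ = ∫ y in f b..f a, 1 / φ y := by
        rw [integral_comp_mul_deriv_of_deriv_nonpos hf hff' hf'_nonpos, integral_symm, neg_neg]

theorem continuousOn_Ici_of_eq_add_integral {E E' : ℝ → ℝ} {a : ℝ}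
    (hint : ∀ t ≥ a, IntervalIntegrable E' volume a t)
    (heq : ∀ t ≥ a, E t = E a + ∫ s in a..t, E' s) : ContinuousOn E (Ici a) := by
  intro t (ht : a ≤ t)
  have hprim : ContinuousOn (fun u => E a + ∫ s in a..u, E' s) (Icc a (t + 1)) := by
    rw [← uIcc_of_le (by linarith)]
    exact continuousOn_const.add
      (continuousOn_primitive_interval' (hint (t + 1) (by linarith)) left_mem_uIcc)
  have hnhds : Icc a (t + 1) ∈ 𝓝[Ici a] t := by
    rw [← Ici_inter_Iic]
    exact inter_mem_nhdsWithin _ (Iic_mem_nhds (lt_add_one t))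
  exact ((hprim t ⟨ht, by linarith⟩).congr (fun u hu => heq u hu.1) (heq t ht))
    |>.mono_of_mem_nhdsWithin hnhds

structure IsWeight (η : ℝ) (w : ℝ → ℝ) : Prop where
  map_zero : w 0 = 0
  strictMonoOn : StrictMonoOn w (Ico 0 η)
  continuousOn : ContinuousOn w (Ico 0 η)

/-- `ψ_r (1 / w τ)`, i.e. `ψ_r` in the variable `τ = w⁻¹ (1 / z)`. -/
noncomputable def decayProfile (w : ℝ → ℝ) (r τ : ℝ) : ℝ :=
  1 / w τ + ∫ y in τ..r, 1 / (y * w y)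

namespace IsWeight

variable {η r : ℝ} {w : ℝ → ℝ}

theorem pos (hw : IsWeight η w) {s : ℝ} (hs : s ∈ Ioo 0 η) : 0 < w s :=
  hw.map_zero ▸ hw.strictMonoOn ⟨le_rfl, hs.1.trans hs.2⟩ (Ioo_subset_Ico_self hs) hs.1

theorem nonneg (hw : IsWeight η w) {s : ℝ} (hs : s ∈ Ico 0 η) : 0 ≤ w s :=
  hw.map_zero ▸ hw.strictMonoOn.monotoneOn ⟨le_rfl, hs.1.trans_lt hs.2⟩ hs hs.1

theorem mul_apply_nonneg (hw : IsWeight η w) {s : ℝ} (hs : s ∈ Ico 0 η) : 0 ≤ s * w s :=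
  mul_nonneg hs.1 (hw.nonneg hs)

theorem strictMonoOn_mul_self (hw : IsWeight η w) : StrictMonoOn (fun y => y * w y) (Ico 0 η) :=
  fun _ hx _ hy hxy => mul_lt_mul'' hxy (hw.strictMonoOn hx hy hxy) hx.1 (hw.nonneg hx)

theorem continuousOn_one_div_mul (hw : IsWeight η w) :
    ContinuousOn (fun y => 1 / (y * w y)) (Ioo 0 η) :=
  continuousOn_const.div (continuousOn_id.mul (hw.continuousOn.mono Ioo_subset_Ico_self))
    fun _ hy => (mul_pos hy.1 (hw.pos hy)).ne'

theorem one_div_mul_nonneg (hw : IsWeight η w) {y : ℝ} (hy : y ∈ Ioo 0 η) :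
    0 ≤ 1 / (y * w y) :=
  one_div_nonneg.2 (mul_pos hy.1 (hw.pos hy)).le

theorem intervalIntegrable_one_div_mul (hw : IsWeight η w) {a b : ℝ} (ha : 0 < a) (hab : a ≤ b)
    (hb : b < η) : IntervalIntegrable (fun y => 1 / (y * w y)) volume a b :=
  (hw.continuousOn_one_div_mul.mono (Icc_subset_Ioo ha hb)).intervalIntegrable_of_Icc hab

theorem integral_one_div_mul_nonneg (hw : IsWeight η w) {a b : ℝ} (ha : 0 < a) (hab : a ≤ b)
    (hb : b < η) : 0 ≤ ∫ y in a..b, 1 / (y * w y) :=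
  integral_nonneg hab fun _ hy => hw.one_div_mul_nonneg ⟨ha.trans_le hy.1, hy.2.trans_lt hb⟩

theorem integral_one_div_mul_mono (hw : IsWeight η w) {a b c d : ℝ} (hc : 0 < c) (hca : c ≤ a)
    (hab : a ≤ b) (hbd : b ≤ d) (hd : d < η) :
    ∫ y in a..b, 1 / (y * w y) ≤ ∫ y in c..d, 1 / (y * w y) :=
  integral_mono_interval hca hab hbd ((ae_restrict_iff' measurableSet_Ioc).2
    (.of_forall fun _ hy => hw.one_div_mul_nonneg ⟨hc.trans hy.1, hy.2.trans_lt hd⟩))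
    (hw.intervalIntegrable_one_div_mul hc (hca.trans (hab.trans hbd)) hd)

theorem decayProfile_self : decayProfile w r r = 1 / w r := by
  simp [decayProfile]

theorem strictAntiOn_decayProfile (hw : IsWeight η w) (hr : r < η) :
    StrictAntiOn (decayProfile w r) (Ioc 0 r) := by
  intro a ha b hb hab
  have hsplit := integral_add_adjacent_intervals
    (hw.intervalIntegrable_one_div_mul ha.1 hab.le (hb.2.trans_lt hr))
    (hw.intervalIntegrable_one_div_mul (ha.1.trans hab) hb.2 hr)
  have hnonneg := hw.integral_one_div_mul_nonneg ha.1 hab.le (hb.2.trans_lt hr)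
  have hinv : 1 / w b < 1 / w a := one_div_lt_one_div_of_lt (hw.pos ⟨ha.1, ha.2.trans_lt hr⟩)
    (hw.strictMonoOn ⟨ha.1.le, ha.2.trans_lt hr⟩
      ⟨(ha.1.trans hab).le, hb.2.trans_lt hr⟩ hab)
  simp only [decayProfile]
  linarith

theorem continuousOn_decayProfile (hw : IsWeight η w) {a : ℝ} (ha : 0 < a)
    (hr : r < η) : ContinuousOn (decayProfile w r) (Icc a r) := by
  rcases lt_or_ge r a with har | har
  · rw [Icc_eq_empty_of_lt har]
    exact continuousOn_empty _
  have hsub : Icc a r ⊆ Ioo 0 η := Icc_subset_Ioo ha hr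
  have hprim := continuousOn_primitive_interval_left (μ := volume)
    (by rw [uIcc_of_le har]; exact (hw.continuousOn_one_div_mul.mono hsub).integrableOn_Icc)
  rw [uIcc_of_le har] at hprim
  exact (continuousOn_const.div (hw.continuousOn.mono (hsub.trans Ioo_subset_Ico_self))
    fun y hy => (hw.pos (hsub hy)).ne').add hprim

theorem exists_decayProfile_eq (hw : IsWeight η w) (hsurj : SurjOn w (Ico 0 η) (Ici 0))
    (hr : r ∈ Ioo 0 η) {y : ℝ} (hy : 1 / w r ≤ y) :
    ∃ τ ∈ Ioc 0 r, decayProfile w r τ = y := by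
  have hwr := hw.pos hr
  have hy0 : 0 < y := (one_div_pos.2 hwr).trans_le hy
  have hmin : 0 < min (1 / y) (w r) := lt_min (one_div_pos.2 hy0) hwr
  obtain ⟨a, ha, hwa⟩ := hsurj (mem_Ici.2 hmin.le)
  have ha0 : 0 < a := ha.1.lt_of_ne (by rintro rfl; rw [hw.map_zero] at hwa; linarith)
  have har : a ≤ r := (hw.strictMonoOn.le_iff_le ha ⟨hr.1.le, hr.2⟩).1
    (hwa ▸ min_le_right _ _)
  have hya : y ≤ decayProfile w r a := by
    have h1 : y ≤ 1 / w a := by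
      rw [hwa, le_one_div hy0 hmin]
      exact min_le_left _ _
    have h2 := hw.integral_one_div_mul_nonneg ha0 har hr.2
    simp only [decayProfile]
    linarith
  obtain ⟨τ, hτ, hτy⟩ := intermediate_value_Icc' har (hw.continuousOn_decayProfile ha0 hr.2)
    ⟨decayProfile_self.le.trans hy, hya⟩
  exact ⟨τ, ⟨ha0.trans_le hτ.1, hτ.2⟩, hτy⟩

end IsWeight

section Decay

variable {η M r : ℝ} {E w : ℝ → ℝ}

theorem IsWeight.antitoneOn_comp_mul_self (hw : IsWeight η w)
    (hErange : ∀ t ≥ 0, E t ∈ Ico 0 η) (hE_anti : AntitoneOn E (Ici 0)) :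
    AntitoneOn (fun τ => E τ * w (E τ)) (Ici 0) :=
  fun _ ha _ hb hab => hw.strictMonoOn_mul_self.monotoneOn (hErange _ hb) (hErange _ ha)
    (hE_anti ha hb hab)

theorem IsWeight.continuousOn_comp_mul_self (hw : IsWeight η w)
    (hErange : ∀ t ≥ 0, E t ∈ Ico 0 η) (hEcont : ContinuousOn E (Ioi 0)) :
    ContinuousOn (fun τ => E τ * w (E τ)) (Ioi 0) :=
  hEcont.mul (hw.continuousOn.comp hEcont fun τ hτ => hErange τ (le_of_lt hτ))

theorem IsWeight.tendsto_zero_of_mul_le (hw : IsWeight η w) {C : ℝ}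
    (hErange : ∀ t ≥ 0, E t ∈ Ico 0 η) (hbound : ∀ t ≥ 0, t * (E t * w (E t)) ≤ C) :
    Tendsto E atTop (𝓝 0) := by
  rw [tendsto_order]
  refine ⟨fun a ha => ?_, fun ε hε => ?_⟩
  · filter_upwards [eventually_ge_atTop 0] with t ht
    exact ha.trans_le (hErange t ht).1
  have hη : 0 < η := (hErange 0 le_rfl).1.trans_lt (hErange 0 le_rfl).2
  set ε₀ := min ε (η / 2)
  have hε₀ : ε₀ ∈ Ioo 0 η :=
    ⟨lt_min hε (by positivity), (min_le_right _ _).trans_lt (by linarith)⟩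
  have hc : 0 < ε₀ * w ε₀ := mul_pos hε₀.1 (hw.pos hε₀)
  filter_upwards [eventually_gt_atTop (C / (ε₀ * w ε₀)), eventually_ge_atTop 0] with t htC ht
  refine lt_of_lt_of_le ?_ (min_le_left ε (η / 2))
  by_contra! hle
  have hmono : ε₀ * w ε₀ ≤ E t * w (E t) :=
    hw.strictMonoOn_mul_self.monotoneOn (Ioo_subset_Ico_self hε₀) (hErange t ht) hle
  linarith [(div_lt_iff₀ hc).1 htC, mul_le_mul_of_nonneg_left hmono ht, hbound t ht]

theorem IsWeight.apply_le_of_div_le (hw : IsWeight η w) (hM : 0 < M) (hr : r ∈ Ioo 0 η)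
    (hErange : ∀ t ≥ 0, E t ∈ Ico 0 η) (hbound : ∀ t ≥ 0, t * (E t * w (E t)) ≤ M * r)
    {t : ℝ} (ht : M / w r ≤ t) : E t ≤ r := by
  have hwr := hw.pos hr
  have ht0 : 0 < t := (div_pos hM hwr).trans_le ht
  refine (hw.strictMonoOn_mul_self.le_iff_le (hErange t ht0.le) (Ioo_subset_Ico_self hr)).1 ?_
  have h1 : M / w r * (E t * w (E t)) ≤ M / w r * (r * w r) := by
    calc M / w r * (E t * w (E t)) ≤ t * (E t * w (E t)) :=
          mul_le_mul_of_nonneg_right ht (hw.mul_apply_nonneg (hErange t ht0.le))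
      _ ≤ M * r := hbound t ht0.le
      _ = M / w r * (r * w r) := by field_simp
  exact le_of_mul_le_mul_left h1 (div_pos hM hwr)

theorem IsWeight.le_mul_integral_of_le_tail (hw : IsWeight η w) (hM : 0 < M) (hrη : r < η)
    (hErange : ∀ t ≥ 0, E t ∈ Ico 0 η) (hEcont : ContinuousOn E (Ioi 0))
    (hint : IntegrableOn (fun τ => E τ * w (E τ)) (Ioi 0))
    (htail : ∀ S ≥ 0, ∫ τ in Ioi S, E τ * w (E τ) ≤ M * E S)
    (htotal : ∫ τ in Ioi 0, E τ * w (E τ) ≤ M * r)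
    {S e : ℝ} (hS : 0 ≤ S) (he : 0 < e) (heS : M * e ≤ ∫ τ in Ioi S, E τ * w (E τ)) :
    S ≤ M * ∫ y in e..r, 1 / (y * w y) := by
  set h := fun τ => E τ * w (E τ)
  set F := fun b => (∫ τ in Ioi b, h τ) / M
  have hF_anti : AntitoneOn F (Ici 0) := fun a ha b hb hab =>
    div_le_div_of_nonneg_right (antitoneOn_setIntegral_Ioi hint
      (fun τ hτ => hw.mul_apply_nonneg (hErange τ hτ)) ha hb hab) hM.le
  have hF_le : ∀ x ≥ 0, F x ≤ E x := fun x hx => (div_le_iff₀' hM).2 (htail x hx)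
  have heF : e ≤ F S := (le_div_iff₀' hM).2 heS
  have hFr : F 0 ≤ r := (div_le_iff₀' hM).2 htotal
  have hF_mem : ∀ x ∈ Icc 0 S, F x ∈ Ioo 0 η := fun x hx =>
    ⟨he.trans_le (heF.trans (hF_anti hx.1 (hx.1.trans hx.2) hx.2)),
      ((hF_anti self_mem_Ici hx.1 hx.1).trans hFr).trans_lt hrη⟩
  have hh_cont : ContinuousOn h (Ioi 0) := hw.continuousOn_comp_mul_self hErange hEcont
  have hF_deriv : ∀ x ∈ Ioo 0 S, HasDerivAt F (-h x / M) x := fun x hx =>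
    (hasDerivAt_integral_Ioi hint hx.1
      (hh_cont.stronglyMeasurableAtFilter isOpen_Ioi x hx.1)
      (hh_cont.continuousAt (Ioi_mem_nhds hx.1))).div_const M
  have hFS0 : F S ≤ F 0 := hF_anti self_mem_Ici hS hS
  have hφ_inv : (fun y => 1 / (y * w y / M)) = fun y => M * (1 / (y * w y)) :=
    funext fun y => by rw [one_div_div, mul_one_div]
  have hcomparison := sub_le_integral_of_hasDerivAt_le (φ := fun y => y * w y / M) hS
    ((hint.continuousOn_Ici_primitive_Ioi).div_const M |>.mono Icc_subset_Ici_self)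
    hF_deriv
    (fun x hx => div_pos (mul_pos (hF_mem x (Ioo_subset_Icc_self hx)).1
      (hw.pos (hF_mem x (Ioo_subset_Icc_self hx)))) hM)
    (fun x hx => by
      rw [neg_div, neg_le_neg_iff]
      refine div_le_div_of_nonneg_right ?_ hM.le
      exact hw.strictMonoOn_mul_self.monotoneOn
        (Ioo_subset_Ico_self (hF_mem x (Ioo_subset_Icc_self hx))) (hErange x hx.1.le)
        (hF_le x hx.1.le))
    (by rw [hφ_inv]; exact (hw.intervalIntegrable_one_div_mul (he.trans_le heF) hFS0
      (hFr.trans_lt hrη)).const_mul M)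
  calc S = S - 0 := (sub_zero S).symm
    _ ≤ ∫ y in F S..F 0, 1 / (y * w y / M) := hcomparison
    _ = M * ∫ y in F S..F 0, 1 / (y * w y) := by
        rw [hφ_inv, intervalIntegral.integral_const_mul]
    _ ≤ M * ∫ y in e..r, 1 / (y * w y) :=
        mul_le_mul_of_nonneg_left (hw.integral_one_div_mul_mono he heF hFS0 hFr hrη) hM.le

theorem IsWeight.le_mul_decayProfile (hw : IsWeight η w) (hM : 0 < M)
    (hrη : r < η) (hErange : ∀ t ≥ 0, E t ∈ Ico 0 η) (hE_anti : AntitoneOn E (Ici 0))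
    (hEcont : ContinuousOn E (Ioi 0)) (hint : IntegrableOn (fun τ => E τ * w (E τ)) (Ioi 0))
    (htail : ∀ S ≥ 0, ∫ τ in Ioi S, E τ * w (E τ) ≤ M * E S)
    (htotal : ∫ τ in Ioi 0, E τ * w (E τ) ≤ M * r)
    {t : ℝ} (ht : 0 ≤ t) (he : 0 < E t) (her : E t ≤ r) :
    t ≤ M * decayProfile w r (E t) := by
  have hwe : 0 < w (E t) := hw.pos ⟨he, (hErange t ht).2⟩
  have hK_nonneg := hw.integral_one_div_mul_nonneg he her hrη
  suffices t - M / w (E t) ≤ M * ∫ y in E t..r, 1 / (y * w y) by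
    rw [decayProfile, mul_add, mul_one_div]
    linarith
  rcases lt_or_ge (t - M / w (E t)) 0 with hS | hS
  · nlinarith
  have hlow := mul_le_setIntegral_Ioi_of_antitoneOn (sub_le_self t (div_pos hM hwe).le)
    (hint.mono_set (Ioi_subset_Ioi hS)) ((hw.antitoneOn_comp_mul_self hErange hE_anti).mono
      (Ici_subset_Ici.2 hS)) fun x hx => hw.mul_apply_nonneg (hErange x (hS.trans hx))
  have hMe : (t - (t - M / w (E t))) * (E t * w (E t)) = M * E t := by
    field_simp
    ring
  exact hw.le_mul_integral_of_le_tail hM hrη hErange hEcont hint htail htotal hS he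
    (hMe ▸ hlow)

end Decay

theorem stmt_19_general (η M r : ℝ) (hM : 0 < M) (hr : r ∈ Set.Ioo (0:ℝ) η)
    (E : ℝ → ℝ)
    (hErange : ∀ t ≥ (0:ℝ), E t ∈ Set.Ico (0:ℝ) η)
    (hE_anti : AntitoneOn E (Set.Ici 0))
    -- absolute continuity of E on [0,∞): E is an indefinite integral of some E'
    (hE_AC : ∃ E' : ℝ → ℝ,
      (∀ t ≥ (0:ℝ), IntervalIntegrable E' MeasureTheory.volume 0 t) ∧
      ∀ t ≥ (0:ℝ), E t = E 0 + ∫ s in (0:ℝ)..t, E' s)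
    (w winv : ℝ → ℝ)
    (hw0 : w 0 = 0)
    (hwmono : StrictMonoOn w (Set.Ico 0 η))
    (hwcont : ContinuousOn w (Set.Ico 0 η))
    (hwsurj : Set.BijOn w (Set.Ico 0 η) (Set.Ici 0))
    (hwinv_left : ∀ s ∈ Set.Ico (0:ℝ) η, winv (w s) = s)
    -- the weighted integral inequality
    (hIneq : ∀ S T : ℝ, 0 ≤ S → S ≤ T →
      (∫ t in S..T, w (E t) * E t) ≤ M * E S)
    (hInt0 : IntegrableOn (fun τ => E τ * w (E τ)) (Set.Ioi 0))
    (hrcond : (1 / M) * ∫ τ in Set.Ioi (0:ℝ), E τ * w (E τ) ≤ r)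
    (K ψ ψinv : ℝ → ℝ)
    (hK : ∀ τ ∈ Set.Ioc (0:ℝ) r, K τ = ∫ y in τ..r, 1 / (y * w y))
    (hψ : ∀ z ≥ 1 / w r, ψ z = z + K (winv (1 / z)))
    (hψinv_left : ∀ z ≥ 1 / w r, ψinv (ψ z) = z) :
    (∀ t ≥ M / w r, E t ≤ winv (1 / ψinv (t / M))) ∧
    Tendsto E atTop (nhds 0) := by
  have hw : IsWeight η w := ⟨hw0, hwmono, hwcont⟩
  obtain ⟨E', hE'int, hE'eq⟩ := hE_AC
  have hEcont := (continuousOn_Ici_of_eq_add_integral hE'int hE'eq).mono Ioi_subset_Ici_self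
  have htail : ∀ S ≥ 0, ∫ τ in Ioi S, E τ * w (E τ) ≤ M * E S := fun S hS =>
    setIntegral_Ioi_le_of_intervalIntegral_le (hInt0.mono_set (Ioi_subset_Ioi hS))
      fun T hT => by simpa only [mul_comm] using hIneq S T hS hT
  have htotal : ∫ τ in Ioi 0, E τ * w (E τ) ≤ M * r := by
    rwa [one_div_mul_eq_div, div_le_iff₀' hM] at hrcond
  have hbound : ∀ t ≥ 0, t * (E t * w (E t)) ≤ M * r := fun t ht => by
    simpa using (mul_le_setIntegral_Ioi_of_antitoneOn ht hInt0
      (hw.antitoneOn_comp_mul_self hErange hE_anti)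
      fun x hx => hw.mul_apply_nonneg (hErange x hx)).trans htotal
  refine ⟨fun t ht => ?_, hw.tendsto_zero_of_mul_le hErange hbound⟩
  have ht0 : 0 ≤ t := (div_pos hM (hw.pos hr)).le.trans ht
  have her := hw.apply_le_of_div_le hM hr hErange hbound ht
  obtain ⟨τ, hτ, hτt⟩ := hw.exists_decayProfile_eq hwsurj.surjOn hr (y := t / M)
    (by rwa [le_div_iff₀ hM, one_div_mul_eq_div])
  have hτ_mem : τ ∈ Ico 0 η := ⟨hτ.1.le, hτ.2.trans_lt hr.2⟩
  have hzτ : 1 / w r ≤ 1 / w τ := one_div_le_one_div_of_le (hw.pos ⟨hτ.1, hτ_mem.2⟩)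
    (hwmono.monotoneOn hτ_mem ⟨hr.1.le, hr.2⟩ hτ.2)
  have hψτ : ψ (1 / w τ) = decayProfile w r τ := by
    rw [hψ _ hzτ, one_div_one_div, hwinv_left τ hτ_mem, hK τ hτ, decayProfile]
  rw [← hτt, ← hψτ, hψinv_left _ hzτ, one_div_one_div, hwinv_left τ hτ_mem]
  rcases (hErange t ht0).1.eq_or_lt with he | he
  · exact he ▸ hτ.1.le
  refine ((hw.strictAntiOn_decayProfile hr.2).le_iff_ge hτ ⟨he, her⟩).1 ?_
  rw [hτt, div_le_iff₀' hM]
  exact hw.le_mul_decayProfile hM hr.2 hErange hE_anti hEcont hInt0 htail htotal ht0 he her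

theorem stmt_19 (η M r : ℝ) (hη : 0 < η) (hM : 0 < M) (hr : r ∈ Set.Ioo (0:ℝ) η)
    (E : ℝ → ℝ)
    (hErange : ∀ t ≥ (0:ℝ), E t ∈ Set.Ico (0:ℝ) η)
    (hE_anti : AntitoneOn E (Set.Ici 0))
    -- absolute continuity of E on [0,∞): E is an indefinite integral of some E'
    (hE_AC : ∃ E' : ℝ → ℝ,
      (∀ t ≥ (0:ℝ), IntervalIntegrable E' MeasureTheory.volume 0 t) ∧
      ∀ t ≥ (0:ℝ), E t = E 0 + ∫ s in (0:ℝ)..t, E' s)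
    (w winv : ℝ → ℝ)
    (hw0 : w 0 = 0)
    (hwmono : StrictMonoOn w (Set.Ico 0 η))
    (hwcont : ContinuousOn w (Set.Ico 0 η))
    (hwsurj : Set.BijOn w (Set.Ico 0 η) (Set.Ici 0))
    (hwinv_left : ∀ s ∈ Set.Ico (0:ℝ) η, winv (w s) = s)
    (hwinv_right : ∀ y ≥ (0:ℝ), w (winv y) = y)
    -- the weighted integral inequality
    (hIneq : ∀ S T : ℝ, 0 ≤ S → S ≤ T →
      (∫ t in S..T, w (E t) * E t) ≤ M * E S)
    (hInt0 : IntegrableOn (fun τ => E τ * w (E τ)) (Set.Ioi 0))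
    (hrcond : (1 / M) * ∫ τ in Set.Ioi (0:ℝ), E τ * w (E τ) ≤ r)
    (K ψ ψinv : ℝ → ℝ)
    (hK : ∀ τ ∈ Set.Ioc (0:ℝ) r, K τ = ∫ y in τ..r, 1 / (y * w y))
    (hψ : ∀ z ≥ 1 / w r, ψ z = z + K (winv (1 / z)))
    (hψinv_left : ∀ z ≥ 1 / w r, ψinv (ψ z) = z)
    (hψinv_right : ∀ y ≥ 1 / w r, ψ (ψinv y) = y) :
    (∀ t ≥ M / w r, E t ≤ winv (1 / ψinv (t / M))) ∧
    Tendsto E atTop (nhds 0) :=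
  stmt_19_general η M r hM hr E hErange hE_anti hE_AC w winv hw0 hwmono hwcont hwsurj hwinv_left
    hIneq hInt0 hrcond K ψ ψinv hK hψ hψinv_left
end
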